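/- arXiv:2512.10423 — 11 statements merged into one kernel-verified Lean document; each statement's English description precedes it below -/
import Mathlib

section
/- Let J ⊆ ℝ be an open interval and f : J → ℝ continuously differentiable with f(y)² < 1 for all y ∈ J. For i = 1, 2 let γᵢ = (xᵢ, yᵢ) : I → ℝ² be continuously differentiable curves on an interval I with xᵢ'(s)² + yᵢ'(s)² = 1, yᵢ'(s) > 0, yᵢ(s) ∈ J, and xᵢ'(s) = f(yᵢ(s)) for all s ∈ I. If y₁(s₀) = y₂(s₀) for some s₀ ∈ I, then y₁ = y₂ on all of I and x₁ − x₂ is constant on I; that is, γ₂ is obtained from γ₁ by a translation in the direction of the x-axis. (Any Euclidean unit-speed curve with non-constant height y is uniquely determined, up to x-translation, by its geometric linear momentum as a function of the distance y to the x-axis.) -/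
/-!
Since `x' = f(y)` and `x'² + y'² = 1` with `y' > 0`, the height of either curve solves the
autonomous equation `y' = g(y)` with `g = √(1 - f²)`, which is continuous and positive on `J`.
If `G` is a primitive of `1 / g`, then `G ∘ y` has derivative `1` along every solution, so
`G ∘ y₁ - G ∘ y₂` is constant, hence zero; as `G` is strictly increasing, `y₁ = y₂`. Then
`x₁' = f(y₁) = f(y₂) = x₂'`, so `x₁ - x₂` is constant.
-/

open Set

theorem Set.OrdConnected.eq_of_hasDerivAt_eq_zero {E : Type*} [NormedAddCommGroup E]
    [NormedSpace ℝ E] {I : Set ℝ} (hI : I.OrdConnected) {h : ℝ → E}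
    (hd : ∀ s ∈ I, HasDerivAt h 0 s) {a b : ℝ} (ha : a ∈ I) (hb : b ∈ I) : h a = h b := by
  have hle := hI.convex.norm_image_sub_le_of_norm_hasDerivWithin_le
    (fun s hs => (hd s hs).hasDerivWithinAt) (fun _ _ => norm_zero.le) hb ha
  rw [zero_mul, norm_le_zero_iff, sub_eq_zero] at hle
  exact hle

theorem eq_sqrt_one_sub_sq_of_sq_add_sq_eq_one {a b : ℝ} (h : a ^ 2 + b ^ 2 = 1) (hb : 0 ≤ b) :
    b = √(1 - a ^ 2) := by
  rw [← h, add_sub_cancel_left, Real.sqrt_sq hb]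

section Primitive

variable {J : Set ℝ} {φ : ℝ → ℝ} {a : ℝ}

theorem hasDerivAt_integral_of_continuousOn (hJ : IsOpen J) (hJc : J.OrdConnected)
    (hφ : ContinuousOn φ J) (ha : a ∈ J) {y : ℝ} (hy : y ∈ J) :
    HasDerivAt (fun z => ∫ t in a..z, φ t) (φ y) y :=
  intervalIntegral.integral_hasDerivAt_right
    ((hφ.mono (hJc.uIcc_subset ha hy)).intervalIntegrable)
    (hφ.stronglyMeasurableAtFilter hJ y hy) (hφ.continuousAt (hJ.mem_nhds hy))

theorem strictMonoOn_integral_of_pos (hJ : IsOpen J) (hJc : J.OrdConnected)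
    (hφ : ContinuousOn φ J) (hφ0 : ∀ y ∈ J, 0 < φ y) (ha : a ∈ J) :
    StrictMonoOn (fun z => ∫ t in a..z, φ t) J := by
  have hder := fun y hy => hasDerivAt_integral_of_continuousOn hJ hJc hφ ha (y := y) hy
  refine strictMonoOn_of_deriv_pos hJc.convex
    (fun y hy => (hder y hy).continuousAt.continuousWithinAt) fun y hy => ?_
  rw [hJ.interior_eq] at hy
  rw [(hder y hy).deriv]
  exact hφ0 y hy

end Primitive

theorem eqOn_of_hasDerivAt_comp_of_pos {J I : Set ℝ} {g u v : ℝ → ℝ} (hJ : IsOpen J)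
    (hJc : J.OrdConnected) (hg : ContinuousOn g J) (hg0 : ∀ y ∈ J, 0 < g y)
    (hI : I.OrdConnected) (hu : ∀ s ∈ I, HasDerivAt u (g (u s)) s)
    (hv : ∀ s ∈ I, HasDerivAt v (g (v s)) s) (huJ : MapsTo u I J) (hvJ : MapsTo v I J)
    {s₀ : ℝ} (hs₀ : s₀ ∈ I) (h₀ : u s₀ = v s₀) : EqOn u v I := by
  have hginv : ContinuousOn (fun y => (g y)⁻¹) J := hg.inv₀ fun y hy => (hg0 y hy).ne'
  set G : ℝ → ℝ := fun z => ∫ t in u s₀..z, (g t)⁻¹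
  have hG_comp : ∀ w : ℝ → ℝ, (∀ s ∈ I, HasDerivAt w (g (w s)) s) → MapsTo w I J →
      ∀ s ∈ I, HasDerivAt (G ∘ w) 1 s := fun w hw hwJ s hs =>
    ((hasDerivAt_integral_of_continuousOn hJ hJc hginv (huJ hs₀) (hwJ hs)).comp s
      (hw s hs)).congr_deriv (inv_mul_cancel₀ (hg0 _ (hwJ hs)).ne')
  have hdiff : ∀ s ∈ I, HasDerivAt (fun t => G (u t) - G (v t)) 0 s := fun s hs =>
    ((hG_comp u hu huJ s hs).sub (hG_comp v hv hvJ s hs)).congr_deriv (sub_self 1)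
  intro s hs
  have hGs : G (u s) - G (v s) = G (u s₀) - G (v s₀) := hI.eq_of_hasDerivAt_eq_zero hdiff hs hs₀
  rw [h₀, sub_self, sub_eq_zero] at hGs
  exact (strictMonoOn_integral_of_pos hJ hJc hginv (fun y hy => inv_pos.2 (hg0 y hy))
    (huJ hs₀)).injOn (huJ hs) (hvJ hs) hGs

theorem euclidean_curve_determined_by_momentum_general
    (J : Set ℝ) (hJopen : IsOpen J) (hJconn : J.OrdConnected)
    (f : ℝ → ℝ) (hf : ContDiffOn ℝ 1 f J)
    (hf1 : ∀ y ∈ J, f y ^ 2 < 1)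
    (I : Set ℝ) (hIconn : I.OrdConnected)
    (x₁ y₁ x₁' y₁' x₂ y₂ x₂' y₂' : ℝ → ℝ)
    (hx₁ : ∀ s ∈ I, HasDerivAt x₁ (x₁' s) s)
    (hy₁ : ∀ s ∈ I, HasDerivAt y₁ (y₁' s) s)
    (hx₂ : ∀ s ∈ I, HasDerivAt x₂ (x₂' s) s)
    (hy₂ : ∀ s ∈ I, HasDerivAt y₂ (y₂' s) s)
    (hunit₁ : ∀ s ∈ I, x₁' s ^ 2 + y₁' s ^ 2 = 1)
    (hunit₂ : ∀ s ∈ I, x₂' s ^ 2 + y₂' s ^ 2 = 1)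
    (hpos₁ : ∀ s ∈ I, 0 < y₁' s)
    (hpos₂ : ∀ s ∈ I, 0 < y₂' s)
    (hmem₁ : ∀ s ∈ I, y₁ s ∈ J)
    (hmem₂ : ∀ s ∈ I, y₂ s ∈ J)
    (hmom₁ : ∀ s ∈ I, x₁' s = f (y₁ s))
    (hmom₂ : ∀ s ∈ I, x₂' s = f (y₂ s))
    (s₀ : ℝ) (hs₀ : s₀ ∈ I) (heq : y₁ s₀ = y₂ s₀) :
    (∀ s ∈ I, y₁ s = y₂ s) ∧ ∃ d : ℝ, ∀ s ∈ I, x₁ s - x₂ s = d := by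
  have hg : ContinuousOn (fun y => √(1 - f y ^ 2)) J :=
    (continuousOn_const.sub (hf.continuousOn.pow 2)).sqrt
  have hg0 : ∀ y ∈ J, 0 < √(1 - f y ^ 2) := fun y hy => Real.sqrt_pos.2 (by linarith [hf1 y hy])
  have hy₁g : ∀ s ∈ I, HasDerivAt y₁ √(1 - f (y₁ s) ^ 2) s := fun s hs =>
    (hy₁ s hs).congr_deriv <| hmom₁ s hs ▸
      eq_sqrt_one_sub_sq_of_sq_add_sq_eq_one (hunit₁ s hs) (hpos₁ s hs).le
  have hy₂g : ∀ s ∈ I, HasDerivAt y₂ √(1 - f (y₂ s) ^ 2) s := fun s hs =>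
    (hy₂ s hs).congr_deriv <| hmom₂ s hs ▸
      eq_sqrt_one_sub_sq_of_sq_add_sq_eq_one (hunit₂ s hs) (hpos₂ s hs).le
  have hy : EqOn y₁ y₂ I := eqOn_of_hasDerivAt_comp_of_pos hJopen hJconn hg hg0 hIconn
    hy₁g hy₂g hmem₁ hmem₂ hs₀ heq
  have hx : ∀ s ∈ I, HasDerivAt (fun t => x₁ t - x₂ t) 0 s := fun s hs =>
    ((hx₁ s hs).sub (hx₂ s hs)).congr_deriv (by rw [hmom₁ s hs, hmom₂ s hs, hy hs, sub_self])
  exact ⟨fun s hs => hy hs, x₁ s₀ - x₂ s₀, fun s hs => hIconn.eq_of_hasDerivAt_eq_zero hx hs hs₀⟩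

/-- A Euclidean unit-speed curve with non-constant height `y`
(`y' > 0`) is uniquely determined, up to translation in the `x`-direction, by
its geometric linear momentum `𝒦 = x'` as a function `f` of the distance `y`
to the `x`-axis. -/
theorem euclidean_curve_determined_by_momentum
    (J : Set ℝ) (hJopen : IsOpen J) (hJconn : J.OrdConnected)
    (f : ℝ → ℝ) (hf : ContDiffOn ℝ 1 f J)
    (hf1 : ∀ y ∈ J, f y ^ 2 < 1)
    (I : Set ℝ) (hIconn : I.OrdConnected)
    (x₁ y₁ x₁' y₁' x₂ y₂ x₂' y₂' : ℝ → ℝ)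
    (hx₁ : ∀ s ∈ I, HasDerivAt x₁ (x₁' s) s)
    (hy₁ : ∀ s ∈ I, HasDerivAt y₁ (y₁' s) s)
    (hx₂ : ∀ s ∈ I, HasDerivAt x₂ (x₂' s) s)
    (hy₂ : ∀ s ∈ I, HasDerivAt y₂ (y₂' s) s)
    (hcx₁ : ContinuousOn x₁' I) (hcy₁ : ContinuousOn y₁' I)
    (hcx₂ : ContinuousOn x₂' I) (hcy₂ : ContinuousOn y₂' I)
    (hunit₁ : ∀ s ∈ I, x₁' s ^ 2 + y₁' s ^ 2 = 1)
    (hunit₂ : ∀ s ∈ I, x₂' s ^ 2 + y₂' s ^ 2 = 1)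
    (hpos₁ : ∀ s ∈ I, 0 < y₁' s)
    (hpos₂ : ∀ s ∈ I, 0 < y₂' s)
    (hmem₁ : ∀ s ∈ I, y₁ s ∈ J)
    (hmem₂ : ∀ s ∈ I, y₂ s ∈ J)
    (hmom₁ : ∀ s ∈ I, x₁' s = f (y₁ s))
    (hmom₂ : ∀ s ∈ I, x₂' s = f (y₂ s))
    (s₀ : ℝ) (hs₀ : s₀ ∈ I) (heq : y₁ s₀ = y₂ s₀) :
    (∀ s ∈ I, y₁ s = y₂ s) ∧ ∃ d : ℝ, ∀ s ∈ I, x₁ s - x₂ s = d :=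
  euclidean_curve_determined_by_momentum_general J hJopen hJconn f hf hf1 I hIconn x₁ y₁ x₁' y₁' x₂
    y₂ x₂' y₂' hx₁ hy₁ hx₂ hy₂ hunit₁ hunit₂ hpos₁ hpos₂ hmem₁ hmem₂ hmom₁ hmom₂ s₀ hs₀ heq
end

section
/- Let ε ∈ {1, −1}, J ⊆ ℝ an open interval, and f : J → ℝ continuously differentiable with f(x)² + ε > 0 for all x ∈ J. For i = 1, 2 let γᵢ = (xᵢ, zᵢ) : I → ℝ² be continuously differentiable curves on an interval I with xᵢ'(s)² − zᵢ'(s)² = ε, xᵢ'(s) > 0, xᵢ(s) ∈ J, and zᵢ'(s) = f(xᵢ(s)) for all s ∈ I. If x₁(s₀) = x₂(s₀) for some s₀ ∈ I, then x₁ = x₂ on all of I and z₁ − z₂ is constant on I; that is, γ₂ is obtained from γ₁ by a translation in the direction of the z-axis. (Any spacelike or timelike curve with non-constant x is uniquely determined, up to z-translation, by its geometric linear momentum as a function of the pseudodistance x to the z-axis.) -/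
open Set


/-- A spacelike or timelike Lorentzian unit-speed curve
(`x'² − z'² = ε`, `ε = ±1`) with non-constant `x` (`x' > 0`) is uniquely
determined, up to translation in the `z`-direction, by its geometric linear
momentum `𝒦 = z'` as a function `f` of the pseudodistance `x` to the
`z`-axis. -/
theorem lorentzian_curve_determined_by_momentum_z_axis
    (ε : ℝ) (hε : ε = 1 ∨ ε = -1)
    (J : Set ℝ) (hJopen : IsOpen J) (hJconn : J.OrdConnected)
    (f : ℝ → ℝ) (hf : ContDiffOn ℝ 1 f J)
    (hf1 : ∀ x ∈ J, 0 < f x ^ 2 + ε)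
    (I : Set ℝ) (hIconn : I.OrdConnected)
    (x₁ z₁ x₁' z₁' x₂ z₂ x₂' z₂' : ℝ → ℝ)
    (hx₁ : ∀ s ∈ I, HasDerivAt x₁ (x₁' s) s)
    (hz₁ : ∀ s ∈ I, HasDerivAt z₁ (z₁' s) s)
    (hx₂ : ∀ s ∈ I, HasDerivAt x₂ (x₂' s) s)
    (hz₂ : ∀ s ∈ I, HasDerivAt z₂ (z₂' s) s)
    (hcx₁ : ContinuousOn x₁' I) (hcz₁ : ContinuousOn z₁' I)
    (hcx₂ : ContinuousOn x₂' I) (hcz₂ : ContinuousOn z₂' I)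
    (hunit₁ : ∀ s ∈ I, x₁' s ^ 2 - z₁' s ^ 2 = ε)
    (hunit₂ : ∀ s ∈ I, x₂' s ^ 2 - z₂' s ^ 2 = ε)
    (hpos₁ : ∀ s ∈ I, 0 < x₁' s)
    (hpos₂ : ∀ s ∈ I, 0 < x₂' s)
    (hmem₁ : ∀ s ∈ I, x₁ s ∈ J)
    (hmem₂ : ∀ s ∈ I, x₂ s ∈ J)
    (hmom₁ : ∀ s ∈ I, z₁' s = f (x₁ s))
    (hmom₂ : ∀ s ∈ I, z₂' s = f (x₂ s))
    (s₀ : ℝ) (hs₀ : s₀ ∈ I) (heq : x₁ s₀ = x₂ s₀) :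
    (∀ s ∈ I, x₁ s = x₂ s) ∧ ∃ d : ℝ, ∀ s ∈ I, z₁ s - z₂ s = d := by
  -- the autonomous ODE right-hand side
  set g : ℝ → ℝ := fun x => Real.sqrt (f x ^ 2 + ε) with hg_def
  have hgAt : ∀ x ∈ J, ContDiffAt ℝ 1 g x := by
    intro x hx
    have hfx : ContDiffAt ℝ 1 f x := (hf x hx).contDiffAt (hJopen.mem_nhds hx)
    exact ContDiffAt.sqrt (by fun_prop) (ne_of_gt (hf1 x hx))
  have hgC : ContDiffOn ℝ 1 g J := fun x hx => (hgAt x hx).contDiffWithinAt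
  have hderivCont : ContinuousOn (deriv g) J :=
    hgC.continuousOn_deriv_of_isOpen hJopen le_rfl
  -- x₁', x₂' are given by g
  have hgx₁ : ∀ s ∈ I, g (x₁ s) = x₁' s := by
    intro s hs
    have h1 := hunit₁ s hs
    have h2 := hmom₁ s hs
    have : f (x₁ s) ^ 2 + ε = x₁' s ^ 2 := by rw [← h2]; linarith
    rw [hg_def]; simp only []
    rw [this, Real.sqrt_sq (hpos₁ s hs).le]
  have hgx₂ : ∀ s ∈ I, g (x₂ s) = x₂' s := by
    intro s hs
    have h1 := hunit₂ s hs
    have h2 := hmom₂ s hs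
    have : f (x₂ s) ^ 2 + ε = x₂' s ^ 2 := by rw [← h2]; linarith
    rw [hg_def]; simp only []
    rw [this, Real.sqrt_sq (hpos₂ s hs).le]
  have hcont₁ : ContinuousOn x₁ I := fun s hs => (hx₁ s hs).continuousAt.continuousWithinAt
  have hcont₂ : ContinuousOn x₂ I := fun s hs => (hx₂ s hs).continuousAt.continuousWithinAt
  -- Lipschitz setup on a compact convex set
  have setup : ∀ a b : ℝ, a ∈ I → b ∈ I → a ≤ b →
      ∃ (L : NNReal) (K : Set ℝ), (∀ u ∈ Icc a b, x₁ u ∈ K ∧ x₂ u ∈ K) ∧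
        LipschitzOnWith L g K := by
    intro a b ha hb hab
    have hI1 : Icc a b ⊆ I := hIconn.out ha hb
    set A : Set ℝ := x₁ '' Icc a b ∪ x₂ '' Icc a b with hA_def
    have hAcomp : IsCompact A :=
      (isCompact_Icc.image_of_continuousOn (hcont₁.mono hI1)).union
        (isCompact_Icc.image_of_continuousOn (hcont₂.mono hI1))
    have hAne : A.Nonempty := ⟨x₁ a, mem_union_left _ ⟨a, ⟨le_rfl, hab⟩, rfl⟩⟩
    have hAJ : A ⊆ J := by
      rintro y (⟨u, hu, rfl⟩ | ⟨u, hu, rfl⟩)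
      · exact hmem₁ u (hI1 hu)
      · exact hmem₂ u (hI1 hu)
    set m := sInf A
    set M := sSup A
    have hmA : m ∈ A := hAcomp.sInf_mem hAne
    have hMA : M ∈ A := hAcomp.sSup_mem hAne
    have hAK : A ⊆ Icc m M := fun y hy =>
      ⟨csInf_le hAcomp.bddBelow hy, le_csSup hAcomp.bddAbove hy⟩
    have hKJ : Icc m M ⊆ J := hJconn.out (hAJ hmA) (hAJ hMA)
    obtain ⟨C, hC⟩ := isCompact_Icc.exists_bound_of_continuousOn (hderivCont.mono hKJ)
    refine ⟨C.toNNReal, Icc m M, ?_, ?_⟩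
    · intro u hu
      exact ⟨hAK (mem_union_left _ ⟨u, hu, rfl⟩), hAK (mem_union_right _ ⟨u, hu, rfl⟩)⟩
    · refine Convex.lipschitzOnWith_of_nnnorm_deriv_le
        (fun x hx => (hgAt x (hKJ hx)).differentiableAt one_ne_zero) ?_ (convex_Icc m M)
      intro x hx
      rw [← NNReal.coe_le_coe, coe_nnnorm, Real.coe_toNNReal']
      exact le_max_of_le_left (hC x hx)
  -- main uniqueness for x
  have key : ∀ t ∈ I, x₁ t = x₂ t := by
    intro t ht
    rcases le_total s₀ t with hst | hst
    · obtain ⟨L, K, hK, hLip⟩ := setup s₀ t hs₀ ht hst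
      have hI1 : Icc s₀ t ⊆ I := hIconn.out hs₀ ht
      have := ODE_solution_unique_of_mem_Icc_right
        (v := fun _ y => g y) (s := fun _ => K) (fun _ _ => hLip)
        (hcont₁.mono hI1)
        (fun u hu => by
          show HasDerivWithinAt x₁ (g (x₁ u)) (Ici u) u
          rw [hgx₁ u (hI1 (Ico_subset_Icc_self hu))]
          exact (hx₁ u (hI1 (Ico_subset_Icc_self hu))).hasDerivWithinAt)
        (fun u hu => (hK u (Ico_subset_Icc_self hu)).1)
        (hcont₂.mono hI1)
        (fun u hu => by
          show HasDerivWithinAt x₂ (g (x₂ u)) (Ici u) u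
          rw [hgx₂ u (hI1 (Ico_subset_Icc_self hu))]
          exact (hx₂ u (hI1 (Ico_subset_Icc_self hu))).hasDerivWithinAt)
        (fun u hu => (hK u (Ico_subset_Icc_self hu)).2)
        heq
      exact this ⟨hst, le_rfl⟩
    · obtain ⟨L, K, hK, hLip⟩ := setup t s₀ ht hs₀ hst
      have hI1 : Icc t s₀ ⊆ I := hIconn.out ht hs₀
      have := ODE_solution_unique_of_mem_Icc_left
        (v := fun _ y => g y) (s := fun _ => K) (fun _ _ => hLip)
        (hcont₁.mono hI1)
        (fun u hu => by
          show HasDerivWithinAt x₁ (g (x₁ u)) (Iic u) u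
          rw [hgx₁ u (hI1 (Ioc_subset_Icc_self hu))]
          exact (hx₁ u (hI1 (Ioc_subset_Icc_self hu))).hasDerivWithinAt)
        (fun u hu => (hK u (Ioc_subset_Icc_self hu)).1)
        (hcont₂.mono hI1)
        (fun u hu => by
          show HasDerivWithinAt x₂ (g (x₂ u)) (Iic u) u
          rw [hgx₂ u (hI1 (Ioc_subset_Icc_self hu))]
          exact (hx₂ u (hI1 (Ioc_subset_Icc_self hu))).hasDerivWithinAt)
        (fun u hu => (hK u (Ioc_subset_Icc_self hu)).2)
        heq
      exact this ⟨le_rfl, hst⟩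
  refine ⟨key, z₁ s₀ - z₂ s₀, ?_⟩
  -- z₁ - z₂ has zero derivative on I
  have hw : ∀ s ∈ I, HasDerivAt (fun u => z₁ u - z₂ u) 0 s := by
    intro s hs
    have h := (hz₁ s hs).sub (hz₂ s hs)
    have : z₁' s - z₂' s = 0 := by
      rw [hmom₁ s hs, hmom₂ s hs, key s hs]; ring
    rwa [this] at h
  have hwcont : ContinuousOn (fun u => z₁ u - z₂ u) I :=
    fun s hs => (hw s hs).continuousAt.continuousWithinAt
  intro s hs
  rcases le_total s₀ s with hst | hst
  · have hI1 : Icc s₀ s ⊆ I := hIconn.out hs₀ hs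
    have := constant_of_has_deriv_right_zero (hwcont.mono hI1)
      (fun u hu => (hw u (hI1 (Ico_subset_Icc_self hu))).hasDerivWithinAt)
    exact this s ⟨hst, le_rfl⟩
  · have hI1 : Icc s s₀ ⊆ I := hIconn.out hs hs₀
    have := constant_of_has_deriv_right_zero (hwcont.mono hI1)
      (fun u hu => (hw u (hI1 (Ico_subset_Icc_self hu))).hasDerivWithinAt)
    exact (this s₀ ⟨hst, le_rfl⟩).symm
end

section
/- Let ε ∈ {1, −1}, J ⊆ (0, ∞) an open interval, and f : J → (0, ∞) continuously differentiable. For i = 1, 2 let (uᵢ, vᵢ) : I → ℝ² be continuously differentiable curves on an interval I with uᵢ'(s)·vᵢ'(s) = ε, vᵢ(s) ∈ J, and vᵢ'(s) = f(vᵢ(s)) for all s ∈ I. If v₁(s₀) = v₂(s₀) for some s₀ ∈ I, then v₁ = v₂ on all of I and u₁ − u₂ is constant on I; that is, the second curve is obtained from the first by a translation in the direction of the u-axis. (Any spacelike or timelike curve in null coordinates is uniquely determined, up to u-translation, by its geometric linear momentum as a function of the pseudodistance v to the u-axis.) -/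
open intervalIntegral MeasureTheory

/-- If a function has derivative `0` at every point of an order-connected set, it is
constant on that set. -/
lemma const_of_derivZero {I : Set ℝ} (hI : I.OrdConnected) {g : ℝ → ℝ}
    (hg : ∀ s ∈ I, HasDerivAt g 0 s) {a b : ℝ} (ha : a ∈ I) (hb : b ∈ I) :
    g a = g b := by
  wlog hab : a ≤ b generalizing a b
  · exact (this hb ha (le_of_not_ge hab)).symm
  rcases eq_or_lt_of_le hab with rfl | hlt
  · rfl
  have hsub : Set.Icc a b ⊆ I := hI.out ha hb
  have hcont : ContinuousOn g (Set.Icc a b) := fun x hx =>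
    (hg x (hsub hx)).continuousAt.continuousWithinAt
  obtain ⟨c, hc, hc'⟩ := exists_hasDerivAt_eq_slope g (fun _ => 0) hlt hcont
    (fun x hx => hg x (hsub (Set.Ioo_subset_Icc_self hx)))
  have hne : b - a ≠ 0 := sub_ne_zero.2 hlt.ne'
  have h0 := hc'.symm
  rw [div_eq_zero_iff, or_iff_left hne] at h0
  linarith

/-- A spacelike or timelike curve `(u, v)` in null coordinates
(`u'v' = ε`, `ε = ±1`) is uniquely determined, up to translation in the
`u`-direction, by its geometric linear momentum `𝒦 = v'` as a function `f` of
the pseudodistance `v` to the `u`-axis. -/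
theorem null_coordinates_curve_determined_by_momentum
    (ε : ℝ) (hε : ε = 1 ∨ ε = -1)
    (J : Set ℝ) (hJopen : IsOpen J) (hJconn : J.OrdConnected)
    (hJpos : J ⊆ Set.Ioi (0 : ℝ))
    (f : ℝ → ℝ) (hf : ContDiffOn ℝ 1 f J)
    (hfpos : ∀ v ∈ J, 0 < f v)
    (I : Set ℝ) (hIconn : I.OrdConnected)
    (u₁ v₁ u₁' v₁' u₂ v₂ u₂' v₂' : ℝ → ℝ)
    (hu₁ : ∀ s ∈ I, HasDerivAt u₁ (u₁' s) s)
    (hv₁ : ∀ s ∈ I, HasDerivAt v₁ (v₁' s) s)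
    (hu₂ : ∀ s ∈ I, HasDerivAt u₂ (u₂' s) s)
    (hv₂ : ∀ s ∈ I, HasDerivAt v₂ (v₂' s) s)
    (hcu₁ : ContinuousOn u₁' I) (hcv₁ : ContinuousOn v₁' I)
    (hcu₂ : ContinuousOn u₂' I) (hcv₂ : ContinuousOn v₂' I)
    (hunit₁ : ∀ s ∈ I, u₁' s * v₁' s = ε)
    (hunit₂ : ∀ s ∈ I, u₂' s * v₂' s = ε)
    (hmem₁ : ∀ s ∈ I, v₁ s ∈ J)
    (hmem₂ : ∀ s ∈ I, v₂ s ∈ J)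
    (hmom₁ : ∀ s ∈ I, v₁' s = f (v₁ s))
    (hmom₂ : ∀ s ∈ I, v₂' s = f (v₂ s))
    (s₀ : ℝ) (hs₀ : s₀ ∈ I) (heq : v₁ s₀ = v₂ s₀) :
    (∀ s ∈ I, v₁ s = v₂ s) ∧ ∃ d : ℝ, ∀ s ∈ I, u₁ s - u₂ s = d := by
  -- the reciprocal of `f` is continuous on `J`
  have hfne : ∀ y ∈ J, f y ≠ 0 := fun y hy => (hfpos y hy).ne'
  have hcf : ContinuousOn f J := hf.continuousOn
  have hcinv : ContinuousOn (fun y => (f y)⁻¹) J := hcf.inv₀ hfne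
  have hy₀J : v₁ s₀ ∈ J := hmem₁ s₀ hs₀
  -- antiderivative of `1/f`
  set F : ℝ → ℝ := fun y => ∫ t in (v₁ s₀)..y, (f t)⁻¹ with hF
  have hFderiv : ∀ y ∈ J, HasDerivAt F (f y)⁻¹ y := by
    intro y hy
    have hsub : Set.uIcc (v₁ s₀) y ⊆ J := hJconn.uIcc_subset hy₀J hy
    have hint : IntervalIntegrable (fun t => (f t)⁻¹) volume (v₁ s₀) y :=
      (hcinv.mono hsub).intervalIntegrable
    have hmeas : StronglyMeasurableAtFilter (fun t => (f t)⁻¹) (nhds y) :=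
      hcinv.stronglyMeasurableAtFilter hJopen y hy
    exact integral_hasDerivAt_right hint hmeas
      (hcinv.continuousAt (hJopen.mem_nhds hy))
  -- `F` is strictly monotone on `J`
  have hJconv : Convex ℝ J := convex_iff_ordConnected.2 hJconn
  have hFmono : StrictMonoOn F J := by
    apply strictMonoOn_of_deriv_pos hJconv
    · exact fun y hy => (hFderiv y hy).continuousAt.continuousWithinAt
    · intro y hy
      rw [hJopen.interior_eq] at hy
      rw [(hFderiv y hy).deriv]
      exact inv_pos.2 (hfpos y hy)
  -- `s ↦ F (vᵢ s) - s` has derivative zero on `I`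
  have hg : ∀ (v v' : ℝ → ℝ), (∀ s ∈ I, HasDerivAt v (v' s) s) →
      (∀ s ∈ I, v s ∈ J) → (∀ s ∈ I, v' s = f (v s)) →
      ∀ s ∈ I, HasDerivAt (fun s => F (v s) - s) 0 s := by
    intro v v' hv hmem hmom s hs
    have h1 : HasDerivAt (fun s => F (v s)) ((f (v s))⁻¹ * v' s) s :=
      (hFderiv (v s) (hmem s hs)).comp s (hv s hs)
    have h2 : (f (v s))⁻¹ * v' s - 1 = 0 := by
      rw [hmom s hs, inv_mul_cancel₀ (hfne _ (hmem s hs))]; ring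
    have h3 := h1.sub (hasDerivAt_id' s)
    rw [h2] at h3
    exact h3
  -- hence `F (v₁ s) = F (v₂ s)` for all `s ∈ I`, so `v₁ = v₂` on `I`
  have hv12 : ∀ s ∈ I, v₁ s = v₂ s := by
    intro s hs
    have e1 : F (v₁ s) - s = F (v₁ s₀) - s₀ :=
      const_of_derivZero hIconn (hg v₁ v₁' hv₁ hmem₁ hmom₁) hs hs₀
    have e2 : F (v₂ s) - s = F (v₂ s₀) - s₀ :=
      const_of_derivZero hIconn (hg v₂ v₂' hv₂ hmem₂ hmom₂) hs hs₀
    have : F (v₁ s) = F (v₂ s) := by rw [heq] at e1; linarith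
    exact hFmono.injOn (hmem₁ s hs) (hmem₂ s hs) this
  refine ⟨hv12, u₁ s₀ - u₂ s₀, fun s hs => ?_⟩
  -- the derivatives of `u₁` and `u₂` agree
  have hu' : ∀ s ∈ I, u₁' s = u₂' s := by
    intro s hs
    have h1 : v₁' s = f (v₁ s) := hmom₁ s hs
    have h2 : v₂' s = f (v₂ s) := hmom₂ s hs
    have hv : v₁ s = v₂ s := hv12 s hs
    have hne : f (v₂ s) ≠ 0 := hfne _ (hmem₂ s hs)
    have e1 : u₁' s * f (v₂ s) = ε := by rw [← hv, ← h1]; exact hunit₁ s hs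
    have e2 : u₂' s * f (v₂ s) = ε := by rw [← h2]; exact hunit₂ s hs
    have := e1.trans e2.symm
    exact mul_right_cancel₀ hne this
  have hdiff : ∀ t ∈ I, HasDerivAt (fun t => u₁ t - u₂ t) 0 t := by
    intro t ht
    have := (hu₁ t ht).sub (hu₂ t ht)
    rw [hu' t ht, sub_self] at this
    exact this
  exact const_of_derivZero hIconn hdiff hs hs₀
end

section
/- Let ε ∈ {1, −1} and u, v : I → ℝ twice differentiable on an interval I with u'(s)·v'(s) = ε and v(s) > 0 for all s, and define the parabolic rotational surface X : I × ℝ → ℝ³, X(s, t) = ((u(s) + v(s)(1 − t²))/2, −t·v(s), (u(s) − v(s)(1 + t²))/2). Then: E = B(X_s, X_s) = ε, F = B(X_s, X_t) = 0, G = B(X_t, X_t) = v(s)²; the vector ν(s, t) = (X_s ⊠ X_t)/v(s) = ((u'(s) − v'(s) + t²v'(s))/2, t·v'(s), (u'(s) + v'(s) + t²v'(s))/2) satisfies B(ν, ν) = −ε; and e = B(X_ss, ν) = (u'(s)v''(s) − u''(s)v'(s))/2 = −ε·κ(s), f = B(X_st, ν) = 0, g = B(X_tt, ν) = v(s)·v'(s),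 where κ(s) = ε(u''(s)v'(s) − u'(s)v''(s))/2. Consequently 2H = −ε(−κ(s) + v'(s)/v(s)) and K_G = ε·κ(s)·v'(s)/v(s); in particular the principal curvature along parallels is v'(s)/v(s), i.e. 𝒦(v)/v where 𝒦 = v' is the geometric linear momentum with respect to the u-axis. -/
/-- The Minkowski bilinear form `B(u, v) = u₁v₁ + u₂v₂ − u₃v₃` on `ℝ³`. -/
def minkB (u v : ℝ × ℝ × ℝ) : ℝ := u.1 * v.1 + u.2.1 * v.2.1 - u.2.2 * v.2.2

/-- The Lorentzian cross product
`u ⊠ v = (u₂v₃ − u₃v₂, u₃v₁ − u₁v₃, u₂v₁ − u₁v₂)` on `ℝ³`. -/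
def lorentzCross (u v : ℝ × ℝ × ℝ) : ℝ × ℝ × ℝ :=
  (u.2.1 * v.2.2 - u.2.2 * v.2.1, u.2.2 * v.1 - u.1 * v.2.2, u.2.1 * v.1 - u.1 * v.2.1)

/-- Fundamental forms, normal, mean curvature and Gauss
curvature of the parabolic rotational surface
`X(s, t) = ((u(s) + v(s)(1 − t²))/2, −t·v(s), (u(s) − v(s)(1 + t²))/2)`
in `𝕃³`, with unit-speed generatrix `(u, v)` in null coordinates of causal
character `ε` (`u'v' = ε`) and `v > 0`. -/
theorem parabolic_rotational_fundamental_forms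
    (ε : ℝ) (hε : ε = 1 ∨ ε = -1)
    (I : Set ℝ) (hIconn : I.OrdConnected)
    (u v u' v' u'' v'' : ℝ → ℝ)
    (hu : ∀ s ∈ I, HasDerivAt u (u' s) s)
    (hv : ∀ s ∈ I, HasDerivAt v (v' s) s)
    (hu' : ∀ s ∈ I, HasDerivAt u' (u'' s) s)
    (hv' : ∀ s ∈ I, HasDerivAt v' (v'' s) s)
    (hunit : ∀ s ∈ I, u' s * v' s = ε)
    (hvpos : ∀ s ∈ I, 0 < v s)
    (X Xs Xt Xss Xst Xtt ν : ℝ → ℝ → ℝ × ℝ × ℝ) (κ : ℝ → ℝ)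
    (hX : ∀ s t, X s t = ((u s + v s * (1 - t ^ 2)) / 2, -t * v s,
        (u s - v s * (1 + t ^ 2)) / 2))
    (hXs : ∀ s t, Xs s t = ((u' s + v' s * (1 - t ^ 2)) / 2, -t * v' s,
        (u' s - v' s * (1 + t ^ 2)) / 2))
    (hXt : ∀ s t, Xt s t = (-t * v s, -v s, -t * v s))
    (hXss : ∀ s t, Xss s t = ((u'' s + v'' s * (1 - t ^ 2)) / 2, -t * v'' s,
        (u'' s - v'' s * (1 + t ^ 2)) / 2))
    (hXst : ∀ s t, Xst s t = (-t * v' s, -v' s, -t * v' s))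
    (hXtt : ∀ s t, Xtt s t = (-v s, 0, -v s))
    (hν : ∀ s t, ν s t = ((u' s - v' s + t ^ 2 * v' s) / 2, t * v' s,
        (u' s + v' s + t ^ 2 * v' s) / 2))
    (hκ : ∀ s, κ s = ε * (u'' s * v' s - u' s * v'' s) / 2) :
    ∀ s ∈ I, ∀ t : ℝ,
      -- `Xs, Xt, Xss, Xst, Xtt` are indeed the partial derivatives of `X`
      HasDerivAt (fun σ => X σ t) (Xs s t) s ∧
      HasDerivAt (fun τ => X s τ) (Xt s t) t ∧
      HasDerivAt (fun σ => Xs σ t) (Xss s t) s ∧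
      HasDerivAt (fun τ => Xs s τ) (Xst s t) t ∧
      HasDerivAt (fun τ => Xt s τ) (Xtt s t) t ∧
      -- first fundamental form: E = ε, F = 0, G = v²
      minkB (Xs s t) (Xs s t) = ε ∧
      minkB (Xs s t) (Xt s t) = 0 ∧
      minkB (Xt s t) (Xt s t) = v s ^ 2 ∧
      -- unit normal ν = (Xs ⊠ Xt)/v with B(ν, ν) = −ε
      (v s)⁻¹ • lorentzCross (Xs s t) (Xt s t) = ν s t ∧
      minkB (ν s t) (ν s t) = -ε ∧
      -- second fundamental form: e = (u'v'' − u''v')/2 = −ε·κ, f = 0, g = v·v'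
      minkB (Xss s t) (ν s t) = (u' s * v'' s - u'' s * v' s) / 2 ∧
      (u' s * v'' s - u'' s * v' s) / 2 = -ε * κ s ∧
      minkB (Xst s t) (ν s t) = 0 ∧
      minkB (Xtt s t) (ν s t) = v s * v' s ∧
      -- mean curvature: 2H = −ε(−κ + v'/v)
      2 * (-(ε / 2) *
          (minkB (Xss s t) (ν s t) * minkB (Xt s t) (Xt s t)
            - 2 * minkB (Xst s t) (ν s t) * minkB (Xs s t) (Xt s t)
            + minkB (Xtt s t) (ν s t) * minkB (Xs s t) (Xs s t)) /
          (minkB (Xs s t) (Xs s t) * minkB (Xt s t) (Xt s t)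
            - minkB (Xs s t) (Xt s t) ^ 2))
        = -ε * (-κ s + v' s / v s) ∧
      -- Gauss curvature: K_G = ε·κ·v'/v
      -ε * (minkB (Xss s t) (ν s t) * minkB (Xtt s t) (ν s t)
            - minkB (Xst s t) (ν s t) ^ 2) /
          (minkB (Xs s t) (Xs s t) * minkB (Xt s t) (Xt s t)
            - minkB (Xs s t) (Xt s t) ^ 2)
        = ε * (κ s * (v' s / v s)) := by
  intro s hs t
  have hv0 : v s ≠ 0 := (hvpos s hs).ne'
  have hE : minkB (Xs s t) (Xs s t) = ε := by
    simp only [minkB, hXs]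
    linear_combination hunit s hs
  have hF : minkB (Xs s t) (Xt s t) = 0 := by
    simp only [minkB, hXs, hXt]; ring
  have hG : minkB (Xt s t) (Xt s t) = v s ^ 2 := by
    simp only [minkB, hXt]; ring
  have hνν : minkB (ν s t) (ν s t) = -ε := by
    simp only [minkB, hν]
    linear_combination -hunit s hs
  have he : minkB (Xss s t) (ν s t) = (u' s * v'' s - u'' s * v' s) / 2 := by
    simp only [minkB, hXss, hν]; ring
  have hf : minkB (Xst s t) (ν s t) = 0 := by
    simp only [minkB, hXst, hν]; ring
  have hg : minkB (Xtt s t) (ν s t) = v s * v' s := by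
    simp only [minkB, hXtt, hν]; ring
  have hcross : (v s)⁻¹ • lorentzCross (Xs s t) (Xt s t) = ν s t := by
    simp only [lorentzCross, hXs, hXt, hν, Prod.smul_mk, smul_eq_mul, Prod.mk.injEq]
    refine ⟨?_, ?_, ?_⟩ <;> field_simp <;> ring
  have hDs : HasDerivAt (fun σ => X σ t) (Xs s t) s := by
    rw [hXs]
    have : (fun σ => X σ t) = fun σ => ((u σ + v σ * (1 - t ^ 2)) / 2, -t * v σ,
        (u σ - v σ * (1 + t ^ 2)) / 2) := by funext σ; rw [hX]
    rw [this]
    exact (((hu s hs).add ((hv s hs).mul_const _)).div_const 2).prodMk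
      (((hv s hs).const_mul (-t)).prodMk
        (((hu s hs).sub ((hv s hs).mul_const _)).div_const 2))
  have hDt : HasDerivAt (fun τ => X s τ) (Xt s t) t := by
    rw [hXt]
    have : (fun τ => X s τ) = fun τ => ((u s + v s * (1 - τ ^ 2)) / 2, -τ * v s,
        (u s - v s * (1 + τ ^ 2)) / 2) := by funext τ; rw [hX]
    rw [this]
    have h1 : HasDerivAt (fun τ : ℝ => (u s + v s * (1 - τ ^ 2)) / 2) (-t * v s) t := by
      have := (((hasDerivAt_pow 2 t).const_sub 1).const_mul (v s)).const_add (u s)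
      have := this.div_const 2
      exact this.congr_deriv (by ring)
    have h2 : HasDerivAt (fun τ : ℝ => -τ * v s) (-v s) t := by
      simpa using (hasDerivAt_id t).neg.mul_const (v s)
    have h3 : HasDerivAt (fun τ : ℝ => (u s - v s * (1 + τ ^ 2)) / 2) (-t * v s) t := by
      have := ((((hasDerivAt_pow 2 t).const_add 1).const_mul (v s)).const_sub (u s)).div_const 2
      exact this.congr_deriv (by ring)
    exact h1.prodMk (h2.prodMk h3)
  have hDss : HasDerivAt (fun σ => Xs σ t) (Xss s t) s := by
    rw [hXss]
    have : (fun σ => Xs σ t) = fun σ => ((u' σ + v' σ * (1 - t ^ 2)) / 2, -t * v' σ,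
        (u' σ - v' σ * (1 + t ^ 2)) / 2) := by funext σ; rw [hXs]
    rw [this]
    exact (((hu' s hs).add ((hv' s hs).mul_const _)).div_const 2).prodMk
      (((hv' s hs).const_mul (-t)).prodMk
        (((hu' s hs).sub ((hv' s hs).mul_const _)).div_const 2))
  have hDst : HasDerivAt (fun τ => Xs s τ) (Xst s t) t := by
    rw [hXst]
    have : (fun τ => Xs s τ) = fun τ => ((u' s + v' s * (1 - τ ^ 2)) / 2, -τ * v' s,
        (u' s - v' s * (1 + τ ^ 2)) / 2) := by funext τ; rw [hXs]
    rw [this]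
    have h1 : HasDerivAt (fun τ : ℝ => (u' s + v' s * (1 - τ ^ 2)) / 2) (-t * v' s) t := by
      have := ((((hasDerivAt_pow 2 t).const_sub 1).const_mul (v' s)).const_add (u' s)).div_const 2
      exact this.congr_deriv (by ring)
    have h2 : HasDerivAt (fun τ : ℝ => -τ * v' s) (-v' s) t := by
      simpa using (hasDerivAt_id t).neg.mul_const (v' s)
    have h3 : HasDerivAt (fun τ : ℝ => (u' s - v' s * (1 + τ ^ 2)) / 2) (-t * v' s) t := by
      have := ((((hasDerivAt_pow 2 t).const_add 1).const_mul (v' s)).const_sub (u' s)).div_const 2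
      exact this.congr_deriv (by ring)
    exact h1.prodMk (h2.prodMk h3)
  have hDtt : HasDerivAt (fun τ => Xt s τ) (Xtt s t) t := by
    rw [hXtt]
    have : (fun τ => Xt s τ) = fun τ => (-τ * v s, -v s, -τ * v s) := by
      funext τ; rw [hXt]
    rw [this]
    have h2 : HasDerivAt (fun τ : ℝ => -τ * v s) (-v s) t := by
      simpa using (hasDerivAt_id t).neg.mul_const (v s)
    exact h2.prodMk ((hasDerivAt_const t (-v s)).prodMk h2)
  refine ⟨hDs, hDt, hDss, hDst, hDtt, hE, hF, hG, hcross, hνν, he, ?_, hf, hg, ?_, ?_⟩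
  · rcases hε with h | h <;> subst h <;> rw [hκ] <;> ring
  · rw [hE, hF, hG, he, hf, hg, hκ]
    rcases hε with h | h <;> subst h <;> field_simp <;> ring
  · rw [hE, hF, hG, he, hf, hg, hκ]
    rcases hε with h | h <;> subst h <;> field_simp <;> ring
end

section
/- Let ε ∈ {1, −1} and (x, z) : I → ℝ² twice continuously differentiable on an interval I with x'(s)² − z'(s)² = ε, z(s) > 0 and x'(s) > 0 for all s, and suppose the zero mean curvature condition ε(x'(s)z''(s) − x''(s)z'(s)) = −x'(s)/z(s) holds for all s ∈ I. Then a := z(s)·x'(s) is a positive constant on I, and z'(s)² = (a² − ε·z(s)²)/z(s)² for all s (so z(s) ≤ a when ε = 1). Moreover, on every subinterval of I on which z' does not vanish there exist x₀ ∈ ℝ and σ ∈ {1, −1} such that: if ε = 1, x(s) = x₀ + σ·a·arcsin(z(s)/a), so the generated surface lies in the catenoid of second kind {x₃² − x₂² = a²·sin²((x₁ − x₀)/a)}; and if ε = −1, x(s) = x₀ + σ·a·arcsinh(z(s)/a), so the generated surface lies in the catenoid of fourth kind {x₃² − x₂² = a²·sinh²((x₁ − x₀)/a)}. -/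
private lemma constAux {f f' : ℝ → ℝ} {u v : ℝ} (huv : u ≤ v)
    (hf : ∀ r ∈ Set.Icc u v, HasDerivAt f (f' r) r)
    (h0 : ∀ r ∈ Set.Icc u v, f' r = 0) : f v = f u :=
  constant_of_has_deriv_right_zero
    (fun r hr => (hf r hr).continuousAt.continuousWithinAt)
    (fun r hr => by
      have h := (hf r (Set.Ico_subset_Icc_self hr)).hasDerivWithinAt (s := Set.Ici r)
      rwa [h0 r (Set.Ico_subset_Icc_self hr)] at h)
    v (Set.right_mem_Icc.2 huv)

private lemma derivZeroAux {ε zr x'r z'r x''r z''r : ℝ} (hε : ε ^ 2 = 1)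
    (hz : 0 < zr) (hx' : 0 < x'r)
    (hunit : x'r ^ 2 - z'r ^ 2 = ε)
    (hH : ε * (x'r * z''r - x''r * z'r) = -(x'r / zr))
    (he3 : x'r * x''r = z'r * z''r) :
    z'r * x'r + zr * x''r = 0 := by
  have hzne := hz.ne'
  have hH' : ε * (x'r * z''r - x''r * z'r) * zr = -x'r := by
    rw [hH]; field_simp
  have hz'' : z''r * zr = -x'r ^ 2 := by
    linear_combination x'r * hH' + ε * z'r * zr * he3 - ε * z''r * zr * hunit
      - z''r * zr * hε
  have hmul : (z'r * x'r + zr * x''r) * x'r = 0 := by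
    linear_combination zr * he3 + z'r * hz''
  rcases mul_eq_zero.mp hmul with h | h
  · exact h
  · exact absurd h hx'.ne'

/-- Zero-mean-curvature hyperbolic rotational surfaces of
first type in `𝕃³`: for a unit-speed Lorentzian generatrix `(x, z)` of causal
character `ε` with `z > 0`, `x' > 0` and curvature `κ = −x'/z` (i.e. `H = 0`),
the quantity `a = z·x'` is a positive constant, `z'² = (a² − ε·z²)/z²`
(so `z ≤ a` when `ε = 1`), and on every subinterval where `z'` does not vanish
the curve is a graph `x = x₀ ± a·arcsin(z/a)` (spacelike case: catenoid of
second kind `x₃² − x₂² = a²·sin²((x₁ − x₀)/a)`) or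
`x = x₀ ± a·arcsinh(z/a)` (timelike case: catenoid of fourth kind
`x₃² − x₂² = a²·sinh²((x₁ − x₀)/a)`). -/
theorem zero_mean_curvature_hyperbolic_first_type
    (ε : ℝ) (hε : ε = 1 ∨ ε = -1)
    (I : Set ℝ) (hIconn : I.OrdConnected)
    (x z x' z' x'' z'' : ℝ → ℝ)
    (hx : ∀ s ∈ I, HasDerivAt x (x' s) s)
    (hz : ∀ s ∈ I, HasDerivAt z (z' s) s)
    (hx' : ∀ s ∈ I, HasDerivAt x' (x'' s) s)
    (hz' : ∀ s ∈ I, HasDerivAt z' (z'' s) s)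
    (hcx'' : ContinuousOn x'' I) (hcz'' : ContinuousOn z'' I)
    (hunit : ∀ s ∈ I, x' s ^ 2 - z' s ^ 2 = ε)
    (hzpos : ∀ s ∈ I, 0 < z s)
    (hx'pos : ∀ s ∈ I, 0 < x' s)
    (hH : ∀ s ∈ I, ε * (x' s * z'' s - x'' s * z' s) = -(x' s / z s)) :
    ∃ a : ℝ, 0 < a ∧
      (∀ s ∈ I, z s * x' s = a) ∧
      (∀ s ∈ I, z' s ^ 2 = (a ^ 2 - ε * z s ^ 2) / z s ^ 2) ∧
      (ε = 1 → ∀ s ∈ I, z s ≤ a) ∧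
      (∀ I' : Set ℝ, I' ⊆ I → I'.OrdConnected → (∀ s ∈ I', z' s ≠ 0) →
        ∃ x₀ σ : ℝ, (σ = 1 ∨ σ = -1) ∧
          (ε = 1 →
            (∀ s ∈ I', x s = x₀ + σ * a * Real.arcsin (z s / a)) ∧
            ∀ s ∈ I', ∀ t : ℝ,
              (z s * Real.cosh t) ^ 2 - (z s * Real.sinh t) ^ 2
                = a ^ 2 * Real.sin ((x s - x₀) / a) ^ 2) ∧
          (ε = -1 →
            (∀ s ∈ I', x s = x₀ + σ * a * Real.arsinh (z s / a)) ∧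
            ∀ s ∈ I', ∀ t : ℝ,
              (z s * Real.cosh t) ^ 2 - (z s * Real.sinh t) ^ 2
                = a ^ 2 * Real.sinh ((x s - x₀) / a) ^ 2)) := by
  have hε2 : ε ^ 2 = 1 := by rcases hε with h | h <;> rw [h] <;> norm_num
  rcases Set.eq_empty_or_nonempty I with hIe | ⟨s₀, hs₀⟩
  · refine ⟨1, one_pos, by simp [hIe], by simp [hIe], fun _ => by simp [hIe], ?_⟩
    intro I' hI'sub _ _
    have hI'e : I' = ∅ := Set.subset_empty_iff.mp (hIe ▸ hI'sub)
    exact ⟨0, 1, Or.inl rfl, fun _ => ⟨by simp [hI'e], by simp [hI'e]⟩,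
      fun _ => ⟨by simp [hI'e], by simp [hI'e]⟩⟩
  obtain ⟨a, ha_def⟩ : ∃ a : ℝ, a = z s₀ * x' s₀ := ⟨_, rfl⟩
  have ha : 0 < a := ha_def ▸ mul_pos (hzpos s₀ hs₀) (hx'pos s₀ hs₀)
  -- key: the derivative of z * x' vanishes on every nondegenerate subinterval
  have hkey : ∀ u v, u ∈ I → v ∈ I → u < v →
      ∀ r ∈ Set.Icc u v, z' r * x' r + z r * x'' r = 0 := by
    intro u v hu hv huv r hr
    have hsub : Set.Icc u v ⊆ I := hIconn.out hu hv
    have hrI : r ∈ I := hsub hr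
    have hud : UniqueDiffWithinAt ℝ (Set.Icc u v) r := uniqueDiffOn_Icc huv r hr
    have hF : HasDerivWithinAt (fun s => x' s ^ 2 - z' s ^ 2)
        (2 * x' r ^ 1 * x'' r - 2 * z' r ^ 1 * z'' r) (Set.Icc u v) r :=
      (((hx' r hrI).pow 2).sub ((hz' r hrI).pow 2)).hasDerivWithinAt
    have hC : HasDerivWithinAt (fun s => x' s ^ 2 - z' s ^ 2) 0 (Set.Icc u v) r :=
      (hasDerivWithinAt_const r (Set.Icc u v) ε).congr
        (fun y hy => hunit y (hsub hy)) (hunit r hrI)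
    have he3' : (2 : ℝ) * x' r ^ 1 * x'' r - 2 * z' r ^ 1 * z'' r = 0 :=
      hud.eq_deriv _ hF hC
    have he3 : x' r * x'' r = z' r * z'' r := by
      simp only [pow_one] at he3'; linarith
    exact derivZeroAux hε2 (hzpos r hrI) (hx'pos r hrI) (hunit r hrI) (hH r hrI) he3
  have hconst : ∀ s ∈ I, z s * x' s = a := by
    intro s hs
    have hderivs : ∀ u v, u ∈ I → v ∈ I → u ≤ v →
        ∀ r ∈ Set.Icc u v, HasDerivAt (fun w => z w * x' w)
          (z' r * x' r + z r * x'' r) r := by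
      intro u v hu hv huv r hr
      have hrI : r ∈ I := hIconn.out hu hv hr
      exact (hz r hrI).mul (hx' r hrI)
    rcases lt_trichotomy s s₀ with h | h | h
    · rw [ha_def]
      exact (constAux h.le (hderivs s s₀ hs hs₀ h.le) (hkey s s₀ hs hs₀ h)).symm
    · rw [h, ha_def]
    · rw [ha_def]
      exact constAux h.le (hderivs s₀ s hs₀ hs h.le) (hkey s₀ s hs₀ hs h)
  have hzsq : ∀ s ∈ I, z' s ^ 2 = (a ^ 2 - ε * z s ^ 2) / z s ^ 2 := by
    intro s hs
    have h1 := hunit s hs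
    have h2 := hconst s hs
    have hzne := (hzpos s hs).ne'
    rw [eq_div_iff (pow_ne_zero 2 hzne)]
    linear_combination (z s * x' s + a) * h2 - z s ^ 2 * h1
  refine ⟨a, ha, hconst, hzsq, ?_, ?_⟩
  · intro hε1 s hs
    have h1 := hzsq s hs
    have hzp := hzpos s hs
    have hzne := hzp.ne'
    rw [hε1] at h1
    have h2 : z' s ^ 2 * z s ^ 2 = a ^ 2 - z s ^ 2 := by
      field_simp at h1; linarith
    nlinarith [sq_nonneg (z' s * z s)]
  -- subinterval statement
  intro I' hI'sub hI'conn hz'ne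
  rcases Set.eq_empty_or_nonempty I' with hI'e | ⟨t₀, ht₀⟩
  · exact ⟨0, 1, Or.inl rfl, fun _ => ⟨by simp [hI'e], by simp [hI'e]⟩,
      fun _ => ⟨by simp [hI'e], by simp [hI'e]⟩⟩
  have hz'cont : ContinuousOn z' I' := fun r hr =>
    (hz' r (hI'sub hr)).continuousAt.continuousWithinAt
  -- constant sign of z' on I'
  have hsign : ∀ u ∈ I', ∀ v ∈ I', 0 < z' u → 0 < z' v := by
    intro u hu v hv hzu
    by_contra hzv
    have hzv' : z' v < 0 := lt_of_le_of_ne (not_lt.mp hzv) (hz'ne v hv)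
    rcases le_total u v with huv | huv
    · have hsub : Set.Icc u v ⊆ I' := hI'conn.out hu hv
      obtain ⟨r, hr, hr0⟩ := intermediate_value_Icc' huv (hz'cont.mono hsub)
        (Set.mem_Icc.mpr ⟨hzv'.le, hzu.le⟩)
      exact hz'ne r (hsub hr) hr0
    · have hsub : Set.Icc v u ⊆ I' := hI'conn.out hv hu
      obtain ⟨r, hr, hr0⟩ := intermediate_value_Icc huv (hz'cont.mono hsub)
        (Set.mem_Icc.mpr ⟨hzv'.le, hzu.le⟩)
      exact hz'ne r (hsub hr) hr0
  set σ : ℝ := if 0 < z' t₀ then 1 else -1 with hσ_def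
  have hσ : σ = 1 ∨ σ = -1 := by
    rw [hσ_def]; split <;> simp
  have hσ2 : σ ^ 2 = 1 := by rcases hσ with h | h <;> rw [h] <;> norm_num
  have hσz : ∀ s ∈ I', 0 < σ * z' s := by
    intro s hs
    rw [hσ_def]
    split
    · next h => simpa using hsign t₀ ht₀ s hs h
    · next h =>
      have h1 : z' t₀ < 0 := lt_of_le_of_ne (not_lt.mp h) (hz'ne t₀ ht₀)
      have h2 : ¬ 0 < z' s := fun hc => h (hsign s hs t₀ ht₀ hc)
      have h3 : z' s < 0 := lt_of_le_of_ne (not_lt.mp h2) (hz'ne s hs)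
      nlinarith
  rcases hε with hε1 | hε1
  · -- spacelike case: arcsin
    have hzlt : ∀ s ∈ I', z s < a := by
      intro s hs
      have h1 := hzsq s (hI'sub hs)
      rw [hε1] at h1
      have hzp := hzpos s (hI'sub hs)
      have h2 : z' s ^ 2 * z s ^ 2 = a ^ 2 - z s ^ 2 := by
        field_simp at h1; linarith
      have h4 := hz'ne s hs
      have h5 : 0 < z' s ^ 2 := by rcases h4.lt_or_gt with h | h <;> nlinarith
      have h3 : 0 < z' s ^ 2 * z s ^ 2 := mul_pos h5 (by positivity)
      nlinarith
    have hkey2 : ∀ s ∈ I', z' s ^ 2 * z s ^ 2 = a ^ 2 - z s ^ 2 := by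
      intro s hs
      have h1 := hzsq s (hI'sub hs)
      rw [hε1] at h1
      have hzne := (hzpos s (hI'sub hs)).ne'
      field_simp at h1; linarith
    set g : ℝ → ℝ := fun u => x u - σ * a * Real.arcsin (z u / a) with hg_def
    have hgd : ∀ s ∈ I', HasDerivAt g 0 s := by
      intro s hs
      have hsI := hI'sub hs
      have hzp := hzpos s hsI
      have hy0 : 0 < z s / a := div_pos hzp ha
      have hy1 : z s / a < 1 := (div_lt_one ha).mpr (hzlt s hs)
      have hyne1 : z s / a ≠ 1 := hy1.ne
      have hynem1 : z s / a ≠ -1 := by linarith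
      have harc : HasDerivAt (fun u => Real.arcsin (z u / a))
          (1 / Real.sqrt (1 - (z s / a) ^ 2) * (z' s / a)) s :=
        by have := (Real.hasDerivAt_arcsin hynem1 hyne1).comp s ((hz s hsI).div_const a); exact this
      have hsqrt : Real.sqrt (1 - (z s / a) ^ 2) = σ * z' s * z s / a := by
        have hpos : 0 < σ * z' s * z s / a :=
          div_pos (mul_pos (hσz s hs) hzp) ha
        have hsq : (σ * z' s * z s / a) ^ 2 = 1 - (z s / a) ^ 2 := by
          field_simp
          linear_combination (z' s ^ 2 * z s ^ 2) * hσ2 + hkey2 s hs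
        rw [← hsq, Real.sqrt_sq hpos.le]
      have htot : HasDerivAt g
          (x' s - σ * a * (1 / Real.sqrt (1 - (z s / a) ^ 2) * (z' s / a))) s :=
        (hx s hsI).sub (harc.const_mul (σ * a))
      have hval : x' s - σ * a * (1 / Real.sqrt (1 - (z s / a) ^ 2) * (z' s / a)) = 0 := by
        rw [hsqrt]
        have hz'ne0 : σ * z' s ≠ 0 := (hσz s hs).ne'
        have hx'eq : z s * x' s = a := hconst s hsI
        have hz'ne1 : z' s ≠ 0 := by
          intro h0; rw [h0, mul_zero] at hz'ne0; exact hz'ne0 rfl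
        have hzne := (hzpos s hsI).ne'
        rcases hσ with hσ1 | hσ1 <;> rw [hσ1] <;>
          field_simp <;> linear_combination hx'eq
      rwa [hval] at htot
    have hgconst : ∀ s ∈ I', g s = g t₀ := by
      intro s hs
      have hderivs : ∀ u v, u ∈ I' → v ∈ I' → u ≤ v →
          ∀ r ∈ Set.Icc u v, HasDerivAt g ((fun _ => (0:ℝ)) r) r :=
        fun u v hu hv huv r hr => hgd r (hI'conn.out hu hv hr)
      rcases lt_trichotomy s t₀ with h | h | h
      · exact (constAux h.le (hderivs s t₀ hs ht₀ h.le) (fun _ _ => rfl)).symm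
      · rw [h]
      · exact constAux h.le (hderivs t₀ s ht₀ hs h.le) (fun _ _ => rfl)
    refine ⟨g t₀, σ, hσ, ?_, ?_⟩
    · intro _
      have hxeq : ∀ s ∈ I', x s = g t₀ + σ * a * Real.arcsin (z s / a) := by
        intro s hs
        have := hgconst s hs
        rw [hg_def] at this
        simp only at this
        linarith
      refine ⟨hxeq, ?_⟩
      intro s hs t
      have hsI := hI'sub hs
      have hzp := hzpos s hsI
      have hy0 : 0 ≤ z s / a := (div_pos hzp ha).le
      have hy1 : z s / a ≤ 1 := ((div_lt_one ha).mpr (hzlt s hs)).le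
      have hxs : (x s - g t₀) / a = σ * Real.arcsin (z s / a) := by
        rw [hxeq s hs]; field_simp; ring
      have hsin : Real.sin ((x s - g t₀) / a) ^ 2 = (z s / a) ^ 2 := by
        rw [hxs]
        rcases hσ with h | h <;> rw [h]
        · rw [one_mul, Real.sin_arcsin (by linarith) hy1]
        · rw [neg_one_mul, Real.sin_neg, Real.sin_arcsin (by linarith) hy1]; ring
      rw [hsin]
      have hch := Real.cosh_sq_sub_sinh_sq t
      have hane := ha.ne'
      field_simp
      nlinarith [hch]
    · intro h; rw [hε1] at h; norm_num at h
  · -- timelike case: arsinh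
    have hkey2 : ∀ s ∈ I', z' s ^ 2 * z s ^ 2 = a ^ 2 + z s ^ 2 := by
      intro s hs
      have h1 := hzsq s (hI'sub hs)
      rw [hε1] at h1
      have hzne := (hzpos s (hI'sub hs)).ne'
      field_simp at h1; linarith
    set g : ℝ → ℝ := fun u => x u - σ * a * Real.arsinh (z u / a) with hg_def
    have hgd : ∀ s ∈ I', HasDerivAt g 0 s := by
      intro s hs
      have hsI := hI'sub hs
      have hzp := hzpos s hsI
      have harc : HasDerivAt (fun u => Real.arsinh (z u / a))
          ((Real.sqrt (1 + (z s / a) ^ 2))⁻¹ * (z' s / a)) s :=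
        by have := (Real.hasDerivAt_arsinh (z s / a)).comp s ((hz s hsI).div_const a); exact this
      have hsqrt : Real.sqrt (1 + (z s / a) ^ 2) = σ * z' s * z s / a := by
        have hpos : 0 < σ * z' s * z s / a :=
          div_pos (mul_pos (hσz s hs) hzp) ha
        have hsq : (σ * z' s * z s / a) ^ 2 = 1 + (z s / a) ^ 2 := by
          field_simp
          linear_combination (z' s ^ 2 * z s ^ 2) * hσ2 + hkey2 s hs
        rw [← hsq, Real.sqrt_sq hpos.le]
      have htot : HasDerivAt g
          (x' s - σ * a * ((Real.sqrt (1 + (z s / a) ^ 2))⁻¹ * (z' s / a))) s :=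
        (hx s hsI).sub (harc.const_mul (σ * a))
      have hval : x' s - σ * a * ((Real.sqrt (1 + (z s / a) ^ 2))⁻¹ * (z' s / a)) = 0 := by
        rw [hsqrt]
        have hz'ne0 : σ * z' s ≠ 0 := (hσz s hs).ne'
        have hx'eq : z s * x' s = a := hconst s hsI
        have hz'ne1 : z' s ≠ 0 := by
          intro h0; rw [h0, mul_zero] at hz'ne0; exact hz'ne0 rfl
        have hzne := (hzpos s hsI).ne'
        rcases hσ with hσ1 | hσ1 <;> rw [hσ1] <;>
          field_simp <;> linear_combination hx'eq
      rwa [hval] at htot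
    have hgconst : ∀ s ∈ I', g s = g t₀ := by
      intro s hs
      have hderivs : ∀ u v, u ∈ I' → v ∈ I' → u ≤ v →
          ∀ r ∈ Set.Icc u v, HasDerivAt g ((fun _ => (0:ℝ)) r) r :=
        fun u v hu hv huv r hr => hgd r (hI'conn.out hu hv hr)
      rcases lt_trichotomy s t₀ with h | h | h
      · exact (constAux h.le (hderivs s t₀ hs ht₀ h.le) (fun _ _ => rfl)).symm
      · rw [h]
      · exact constAux h.le (hderivs t₀ s ht₀ hs h.le) (fun _ _ => rfl)
    refine ⟨g t₀, σ, hσ, ?_, ?_⟩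
    · intro h; rw [hε1] at h; norm_num at h
    · intro _
      have hxeq : ∀ s ∈ I', x s = g t₀ + σ * a * Real.arsinh (z s / a) := by
        intro s hs
        have := hgconst s hs
        rw [hg_def] at this
        simp only at this
        linarith
      refine ⟨hxeq, ?_⟩
      intro s hs t
      have hsI := hI'sub hs
      have hzp := hzpos s hsI
      have hxs : (x s - g t₀) / a = σ * Real.arsinh (z s / a) := by
        rw [hxeq s hs]; field_simp; ring
      have hsin : Real.sinh ((x s - g t₀) / a) ^ 2 = (z s / a) ^ 2 := by
        rw [hxs]
        rcases hσ with h | h <;> rw [h]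
        · rw [one_mul, Real.sinh_arsinh]
        · rw [neg_one_mul, Real.sinh_neg, Real.sinh_arsinh]; ring
      rw [hsin]
      have hch := Real.cosh_sq_sub_sinh_sq t
      have hane := ha.ne'
      field_simp
      nlinarith [hch]
end

section
/- Let ε ∈ {1, −1} and (x, z) : I → ℝ² twice continuously differentiable on an interval I with x'(s)² − z'(s)² = ε, x(s) > 0 and z'(s) > 0 for all s, and suppose the zero mean curvature condition ε(x'(s)z''(s) − x''(s)z'(s)) = −z'(s)/x(s) holds for all s ∈ I. Then a := x(s)·z'(s) is a positive constant on I, and x'(s)² = (ε·x(s)² + a²)/x(s)² for all s (so x(s) ≤ a when ε = −1). Moreover, on every subinterval of I on which x' does not vanish there exist z₀ ∈ ℝ and σ ∈ {1, −1} such that: if ε = 1, z(s) = z₀ + σ·a·arcsinh(x(s)/a), so the generated surface lies in the catenoid of first kind {x₁² + x₂² = a²·sinh²((x₃ − z₀)/a)}; and if ε = −1, z(s) = z₀ + σ·a·arcsin(x(s)/a), so the generated surface lies in the catenoid of third kind {x₁² + x₂² = a²·sin²((x₃ − z₀)/a)}. -/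
open Topology

private lemma hasDerivWithinAt_of_bot {f : ℝ → ℝ} {s : Set ℝ} {p d : ℝ}
    (h : 𝓝[s \ {p}] p = ⊥) : HasDerivWithinAt f d s p :=
  hasDerivWithinAt_iff_hasFDerivWithinAt.mpr (HasFDerivWithinAt.of_not_accPt
    (fun hacc => (accPt_principal_iff_nhdsWithin.mp hacc).ne h))

private lemma const_of_deriv0 {J : Set ℝ} (hJ : J.OrdConnected) {f : ℝ → ℝ}
    (hf : ∀ s ∈ J, HasDerivWithinAt f 0 J s) {p q : ℝ} (hp : p ∈ J) (hq : q ∈ J) :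
    f p = f q := by
  have hconv : Convex ℝ J := hJ.convex
  have h := hconv.norm_image_sub_le_of_norm_hasDerivWithin_le (f' := fun _ => (0:ℝ)) (C := 0)
    hf (fun s _ => by simp) hq hp
  have : ‖f p - f q‖ ≤ 0 := by simpa using h
  have := norm_le_zero_iff.mp this
  linarith [sub_eq_zero.mp this]

private lemma sign_pos_of_pos {J : Set ℝ} (hJ : J.OrdConnected) {f : ℝ → ℝ}
    (hf : ContinuousOn f J) (h0 : ∀ s ∈ J, f s ≠ 0) {p q : ℝ} (hp : p ∈ J) (hq : q ∈ J)
    (hfp : 0 < f p) : 0 < f q := by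
  by_contra h
  have hfq : f q < 0 := lt_of_le_of_ne (not_lt.1 h) (h0 q hq)
  rcases le_total p q with hpq | hpq
  · have hsub : Set.Icc p q ⊆ J := hJ.out hp hq
    obtain ⟨c, hc, hc0⟩ := intermediate_value_Icc' hpq (hf.mono hsub) ⟨hfq.le, hfp.le⟩
    exact h0 c (hsub hc) hc0
  · have hsub : Set.Icc q p ⊆ J := hJ.out hq hp
    obtain ⟨c, hc, hc0⟩ := intermediate_value_Icc hpq (hf.mono hsub) ⟨hfq.le, hfp.le⟩
    exact h0 c (hsub hc) hc0

/-- Zero-mean-curvature elliptic rotational surfaces in `𝕃³`: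
for a unit-speed Lorentzian generatrix `(x, z)` of causal character `ε` with
`x > 0`, `z' > 0` and curvature `κ = −z'/x` (i.e. `H = 0`), the quantity
`a = x·z'` is a positive constant, `x'² = (ε·x² + a²)/x²` (so `x ≤ a` when
`ε = −1`), and on every subinterval where `x'` does not vanish the curve is a
graph `z = z₀ ± a·arcsinh(x/a)` (spacelike case: catenoid of first kind
`x₁² + x₂² = a²·sinh²((x₃ − z₀)/a)`) or `z = z₀ ± a·arcsin(x/a)` (timelike
case: catenoid of third kind `x₁² + x₂² = a²·sin²((x₃ − z₀)/a)`). -/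
theorem zero_mean_curvature_elliptic
    (ε : ℝ) (hε : ε = 1 ∨ ε = -1)
    (I : Set ℝ) (hIconn : I.OrdConnected)
    (x z x' z' x'' z'' : ℝ → ℝ)
    (hx : ∀ s ∈ I, HasDerivAt x (x' s) s)
    (hz : ∀ s ∈ I, HasDerivAt z (z' s) s)
    (hx' : ∀ s ∈ I, HasDerivAt x' (x'' s) s)
    (hz' : ∀ s ∈ I, HasDerivAt z' (z'' s) s)
    (hcx'' : ContinuousOn x'' I) (hcz'' : ContinuousOn z'' I)
    (hunit : ∀ s ∈ I, x' s ^ 2 - z' s ^ 2 = ε)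
    (hxpos : ∀ s ∈ I, 0 < x s)
    (hz'pos : ∀ s ∈ I, 0 < z' s)
    (hH : ∀ s ∈ I, ε * (x' s * z'' s - x'' s * z' s) = -(z' s / x s)) :
    ∃ a : ℝ, 0 < a ∧
      (∀ s ∈ I, x s * z' s = a) ∧
      (∀ s ∈ I, x' s ^ 2 = (ε * x s ^ 2 + a ^ 2) / x s ^ 2) ∧
      (ε = -1 → ∀ s ∈ I, x s ≤ a) ∧
      (∀ I' : Set ℝ, I' ⊆ I → I'.OrdConnected → (∀ s ∈ I', x' s ≠ 0) →
        ∃ z₀ σ : ℝ, (σ = 1 ∨ σ = -1) ∧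
          (ε = 1 →
            (∀ s ∈ I', z s = z₀ + σ * a * Real.arsinh (x s / a)) ∧
            ∀ s ∈ I', ∀ t : ℝ,
              (x s * Real.cos t) ^ 2 + (x s * Real.sin t) ^ 2
                = a ^ 2 * Real.sinh ((z s - z₀) / a) ^ 2) ∧
          (ε = -1 →
            (∀ s ∈ I', z s = z₀ + σ * a * Real.arcsin (x s / a)) ∧
            ∀ s ∈ I', ∀ t : ℝ,
              (x s * Real.cos t) ^ 2 + (x s * Real.sin t) ^ 2
                = a ^ 2 * Real.sin ((z s - z₀) / a) ^ 2)) := by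
  classical
  rcases Set.eq_empty_or_nonempty I with rfl | ⟨s₀, hs₀⟩
  · refine ⟨1, one_pos, by simp, by simp, fun _ => by simp, ?_⟩
    intro I' hsub _ _
    have hI' : I' = ∅ := Set.subset_empty_iff.mp hsub
    subst hI'
    exact ⟨0, 1, Or.inl rfl, fun _ => ⟨by simp, by simp⟩, fun _ => ⟨by simp, by simp⟩⟩
  have hε2 : ε * ε = 1 := by rcases hε with rfl | rfl <;> norm_num
  have hconv : Convex ℝ I := hIconn.convex
  set a := x s₀ * z' s₀ with ha_def
  have ha : 0 < a := mul_pos (hxpos s₀ hs₀) (hz'pos s₀ hs₀)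
  have hderiv0 : ∀ s ∈ I, HasDerivWithinAt (fun u => x u * z' u) 0 I s := by
    intro s hs
    by_cases hbot : 𝓝[I \ {s}] s = ⊥
    · exact hasDerivWithinAt_of_bot hbot
    · obtain ⟨t, htI, hts⟩ : ∃ t, t ∈ I ∧ t ≠ s := by
        have hne : (𝓝[I \ {s}] s).NeBot := ⟨hbot⟩
        obtain ⟨t, ht⟩ := Filter.nonempty_of_mem (self_mem_nhdsWithin (a := s) (s := I \ {s}))
        exact ⟨t, ht.1, ht.2⟩
      have hint : (interior I).Nonempty := by
        rcases lt_or_gt_of_ne hts with h | h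
        · exact ⟨(t + s) / 2, (isOpen_Ioo (a := t) (b := s)).subset_interior_iff.mpr
            (Set.Ioo_subset_Icc_self.trans (hIconn.out htI hs)) ⟨by linarith, by linarith⟩⟩
        · exact ⟨(s + t) / 2, (isOpen_Ioo (a := s) (b := t)).subset_interior_iff.mpr
            (Set.Ioo_subset_Icc_self.trans (hIconn.out hs htI)) ⟨by linarith, by linarith⟩⟩
      have hud : UniqueDiffWithinAt ℝ I s :=
        uniqueDiffWithinAt_convex hconv hint (subset_closure hs)
      have hu1 : HasDerivWithinAt (fun u => x' u ^ 2 - z' u ^ 2)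
          (2 * x' s * x'' s - 2 * z' s * z'' s) I s := by
        have h := (((hx' s hs).pow 2).sub ((hz' s hs).pow 2)).hasDerivWithinAt (s := I)
        refine h.congr_deriv ?_
        norm_num
      have hu2 : HasDerivWithinAt (fun u => x' u ^ 2 - z' u ^ 2) 0 I s :=
        (hasDerivWithinAt_const s I ε).congr (fun u hu => hunit u hu) (hunit s hs)
      have hdd : 2 * x' s * x'' s - 2 * z' s * z'' s = 0 := hud.eq_deriv _ hu1 hu2
      have hx0 : x s ≠ 0 := (hxpos s hs).ne'
      have hA : ε * (x' s * z'' s - x'' s * z' s) * x s = -(z' s) := by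
        calc ε * (x' s * z'' s - x'' s * z' s) * x s = -(z' s / x s) * x s := by rw [hH s hs]
        _ = -(z' s) := by field_simp
      have hB : x' s * x'' s = z' s * z'' s := by linarith
      have hC := hunit s hs
      have hval : x s * z'' s = -(x' s * z' s) := by
        linear_combination x' s * hA + (ε * x s * z' s) * hB - (ε * x s * z'' s) * hC
          - (x s * z'' s) * hε2
      have h := ((hx s hs).mul (hz' s hs)).hasDerivWithinAt (s := I)
      have hzero : x' s * z' s + x s * z'' s = 0 := by linarith
      rwa [hzero] at h
  have hconst : ∀ s ∈ I, x s * z' s = a := fun s hs => const_of_deriv0 hIconn hderiv0 hs hs₀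
  have hxsq : ∀ s ∈ I, x' s ^ 2 = (ε * x s ^ 2 + a ^ 2) / x s ^ 2 := by
    intro s hs
    have h1 := hunit s hs
    have h2 := hconst s hs
    have hx0 : x s ≠ 0 := (hxpos s hs).ne'
    field_simp
    linear_combination x s ^ 2 * h1 + (x s * z' s + a) * h2
  have hle : ε = -1 → ∀ s ∈ I, x s ≤ a := by
    intro hm s hs
    have h := hxsq s hs
    rw [hm, eq_div_iff (pow_ne_zero 2 (hxpos s hs).ne')] at h
    nlinarith [sq_nonneg (x' s * x s), hxpos s hs, ha]
  refine ⟨a, ha, hconst, hxsq, hle, ?_⟩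
  intro I' hsubI hconn' hne
  rcases Set.eq_empty_or_nonempty I' with rfl | ⟨s₁, hs₁⟩
  · exact ⟨0, 1, Or.inl rfl, fun _ => ⟨by simp, by simp⟩, fun _ => ⟨by simp, by simp⟩⟩
  have hcont : ContinuousOn x' I' :=
    fun u hu => ((hx' u (hsubI hu)).continuousAt).continuousWithinAt
  set σ : ℝ := if 0 < x' s₁ then 1 else -1 with hσdef
  have hσ : σ = 1 ∨ σ = -1 := by rw [hσdef]; split_ifs <;> simp
  have hsgn : ∀ s ∈ I', 0 < σ * x' s := by
    intro s hs
    rw [hσdef]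
    split_ifs with hP
    · simpa using sign_pos_of_pos hconn' hcont hne hs₁ hs hP
    · have hP' : 0 < (fun u => -x' u) s₁ := by
        rcases lt_or_gt_of_ne (hne s₁ hs₁) with h' | h'
        · simpa using h'
        · exact absurd h' hP
      have h2 := sign_pos_of_pos hconn' hcont.neg
        (fun u hu => neg_ne_zero.mpr (hne u hu)) hs₁ hs hP'
      change 0 < -x' s at h2
      linarith
  have hσabs : ∀ s ∈ I', σ * x' s = |x' s| := by
    intro s hs
    have h := hsgn s hs
    rcases hσ with h1 | h1 <;> rw [h1] at h ⊢
    · rw [abs_of_pos (by linarith)]; ring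
    · rw [abs_of_neg (by linarith)]; ring
  have ha0 : a ≠ 0 := ha.ne'
  rcases hε with rfl | rfl
  · -- spacelike case, arsinh
    refine ⟨z s₁ - σ * a * Real.arsinh (x s₁ / a), σ, hσ, ?_, fun h => by norm_num at h⟩
    intro _
    have hzrep : ∀ s ∈ I', z s = (z s₁ - σ * a * Real.arsinh (x s₁ / a))
        + σ * a * Real.arsinh (x s / a) := by
      have hg0 : ∀ s ∈ I',
          HasDerivWithinAt (fun u => z u - σ * a * Real.arsinh (x u / a)) 0 I' s := by
        intro s hs
        have hsI := hsubI hs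
        have hX := hxpos s hsI
        have hx0 : x s ≠ 0 := hX.ne'
        have harsinh : HasDerivAt (fun u => Real.arsinh (x u / a))
            ((Real.sqrt (1 + (x s / a) ^ 2))⁻¹ * (x' s / a)) s :=
          (Real.hasDerivAt_arsinh _).comp s ((hx s hsI).div_const a)
        have hgd : HasDerivAt (fun u => z u - σ * a * Real.arsinh (x u / a))
            (z' s - σ * a * ((Real.sqrt (1 + (x s / a) ^ 2))⁻¹ * (x' s / a))) s :=
          (hz s hsI).sub (harsinh.const_mul (σ * a))
        have hsq1 : Real.sqrt (1 + (x s / a) ^ 2) = Real.sqrt (a ^ 2 + x s ^ 2) / a := by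
          rw [show 1 + (x s / a) ^ 2 = (a ^ 2 + x s ^ 2) / a ^ 2 by field_simp,
            Real.sqrt_div (by positivity), Real.sqrt_sq ha.le]
        have hsq2 : σ * x' s = Real.sqrt (a ^ 2 + x s ^ 2) / x s := by
          rw [hσabs s hs, ← Real.sqrt_sq_eq_abs, hxsq s hsI,
            show (1 * x s ^ 2 + a ^ 2) / x s ^ 2 = (a ^ 2 + x s ^ 2) / x s ^ 2 by ring,
            Real.sqrt_div (by positivity), Real.sqrt_sq hX.le]
        have hW : z' s = a / x s := by
          rw [eq_div_iff hx0]; linarith [hconst s hsI]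
        have hsqpos : (0:ℝ) < Real.sqrt (a ^ 2 + x s ^ 2) := Real.sqrt_pos.mpr (by positivity)
        have hval : z' s - σ * a * ((Real.sqrt (1 + (x s / a) ^ 2))⁻¹ * (x' s / a)) = 0 := by
          rw [hsq1, hW]
          have hrw : σ * a * ((Real.sqrt (a ^ 2 + x s ^ 2) / a)⁻¹ * (x' s / a)) =
              (σ * x' s) * (a / Real.sqrt (a ^ 2 + x s ^ 2)) := by
            field_simp
          rw [hrw, hsq2]
          field_simp
          ring
        rw [← hval]
        exact hgd.hasDerivWithinAt
      intro s hs
      have h := const_of_deriv0 hconn' hg0 hs hs₁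
      linarith
    refine ⟨hzrep, ?_⟩
    intro s hs t
    have hzr := hzrep s hs
    have hsh : Real.sinh ((z s - (z s₁ - σ * a * Real.arsinh (x s₁ / a))) / a) ^ 2
        = (x s / a) ^ 2 := by
      rw [hzr, show ((z s₁ - σ * a * Real.arsinh (x s₁ / a)) + σ * a * Real.arsinh (x s / a)
          - (z s₁ - σ * a * Real.arsinh (x s₁ / a))) / a = σ * Real.arsinh (x s / a) by
        field_simp; ring]
      rcases hσ with h1 | h1 <;> rw [h1]
      · simp [Real.sinh_arsinh]
      · rw [show (-1 : ℝ) * Real.arsinh (x s / a) = -Real.arsinh (x s / a) by ring,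
          Real.sinh_neg, Real.sinh_arsinh]
        ring
    have hfs : a ^ 2 * (x s / a) ^ 2 = x s ^ 2 := by field_simp
    rw [hsh, hfs]
    linear_combination (x s) ^ 2 * Real.sin_sq_add_cos_sq t
  · -- timelike case, arcsin
    have hlt : ∀ s ∈ I', x s < a := by
      intro s hs
      have h := hxsq s (hsubI hs)
      rw [eq_div_iff (pow_ne_zero 2 (hxpos s (hsubI hs)).ne')] at h
      have hxp := hxpos s (hsubI hs)
      have h2 : 0 < x' s ^ 2 := by
        rcases (hne s hs).lt_or_gt with h' | h' <;> nlinarith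
      nlinarith [mul_pos h2 (mul_pos hxp hxp)]
    refine ⟨z s₁ - σ * a * Real.arcsin (x s₁ / a), σ, hσ, fun h => by norm_num at h, ?_⟩
    intro _
    have hzrep : ∀ s ∈ I', z s = (z s₁ - σ * a * Real.arcsin (x s₁ / a))
        + σ * a * Real.arcsin (x s / a) := by
      have hg0 : ∀ s ∈ I',
          HasDerivWithinAt (fun u => z u - σ * a * Real.arcsin (x u / a)) 0 I' s := by
        intro s hs
        have hsI := hsubI hs
        have hX := hxpos s hsI
        have hx0 : x s ≠ 0 := hX.ne'
        have hdivlt : x s / a < 1 := (div_lt_one ha).mpr (hlt s hs)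
        have hdivpos : 0 < x s / a := div_pos hX ha
        have harcsin : HasDerivAt (fun u => Real.arcsin (x u / a))
            (1 / Real.sqrt (1 - (x s / a) ^ 2) * (x' s / a)) s :=
          (Real.hasDerivAt_arcsin (x := x s / a) (by linarith : -1 < x s / a).ne'
            (ne_of_lt hdivlt)).comp (h := fun u => x u / a) s ((hx s hsI).div_const a)
        have hgd : HasDerivAt (fun u => z u - σ * a * Real.arcsin (x u / a))
            (z' s - σ * a * (1 / Real.sqrt (1 - (x s / a) ^ 2) * (x' s / a))) s :=
          (hz s hsI).sub (harcsin.const_mul (σ * a))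
        have hsub2 : 0 < a ^ 2 - x s ^ 2 := by nlinarith [hlt s hs]
        have hsq1 : Real.sqrt (1 - (x s / a) ^ 2) = Real.sqrt (a ^ 2 - x s ^ 2) / a := by
          rw [show 1 - (x s / a) ^ 2 = (a ^ 2 - x s ^ 2) / a ^ 2 by field_simp,
            Real.sqrt_div hsub2.le, Real.sqrt_sq ha.le]
        have hsq2 : σ * x' s = Real.sqrt (a ^ 2 - x s ^ 2) / x s := by
          rw [hσabs s hs, ← Real.sqrt_sq_eq_abs, hxsq s hsI,
            show (-1 * x s ^ 2 + a ^ 2) / x s ^ 2 = (a ^ 2 - x s ^ 2) / x s ^ 2 by ring,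
            Real.sqrt_div hsub2.le, Real.sqrt_sq hX.le]
        have hW : z' s = a / x s := by
          rw [eq_div_iff hx0]; linarith [hconst s hsI]
        have hsqpos : (0:ℝ) < Real.sqrt (a ^ 2 - x s ^ 2) := Real.sqrt_pos.mpr hsub2
        have hval : z' s - σ * a * (1 / Real.sqrt (1 - (x s / a) ^ 2) * (x' s / a)) = 0 := by
          rw [hsq1, hW]
          have hrw : σ * a * (1 / (Real.sqrt (a ^ 2 - x s ^ 2) / a) * (x' s / a)) =
              (σ * x' s) * (a / Real.sqrt (a ^ 2 - x s ^ 2)) := by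
            field_simp
          rw [hrw, hsq2]
          field_simp
          ring
        rw [← hval]
        exact hgd.hasDerivWithinAt
      intro s hs
      have h := const_of_deriv0 hconn' hg0 hs hs₁
      linarith
    refine ⟨hzrep, ?_⟩
    intro s hs t
    have hzr := hzrep s hs
    have hX := hxpos s (hsubI hs)
    have hsh : Real.sin ((z s - (z s₁ - σ * a * Real.arcsin (x s₁ / a))) / a) ^ 2
        = (x s / a) ^ 2 := by
      rw [hzr, show ((z s₁ - σ * a * Real.arcsin (x s₁ / a)) + σ * a * Real.arcsin (x s / a)
          - (z s₁ - σ * a * Real.arcsin (x s₁ / a))) / a = σ * Real.arcsin (x s / a) by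
        field_simp; ring]
      have hb1 : (-1 : ℝ) ≤ x s / a := by
        have := div_pos hX ha
        linarith
      have hb2 : x s / a ≤ 1 := le_of_lt ((div_lt_one ha).mpr (hlt s hs))
      rcases hσ with h1 | h1 <;> rw [h1]
      · rw [one_mul, Real.sin_arcsin hb1 hb2]
      · rw [show (-1 : ℝ) * Real.arcsin (x s / a) = -Real.arcsin (x s / a) by ring,
          Real.sin_neg, Real.sin_arcsin hb1 hb2]
        ring
    have hfs : a ^ 2 * (x s / a) ^ 2 = x s ^ 2 := by field_simp
    rw [hsh, hfs]
    linear_combination (x s) ^ 2 * Real.sin_sq_add_cos_sq t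
end

section
/- Let (x, y) : I → ℝ² be twice continuously differentiable on an interval I with x'(s)² + y'(s)² = 1, y(s) > 0 and x'(s) > 0 for all s, and suppose the zero mean curvature condition x'(s)y''(s) − x''(s)y'(s) = x'(s)/y(s) holds for all s ∈ I. Then a := y(s)·x'(s) is a positive constant on I, and y'(s)² = (y(s)² − a²)/y(s)² for all s (so y(s) ≥ a always). Moreover, on every subinterval of I on which y' does not vanish there exist x₀ ∈ ℝ and σ ∈ {1, −1} such that x(s) = x₀ + σ·a·arccosh(y(s)/a), so the generated surface lies in the catenoid of fifth kind {x₂² − x₃² = a²·cosh²((x₁ − x₀)/a)}. -/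
/-- The inverse hyperbolic cosine `arccosh t = log (t + √(t² − 1))`. -/
noncomputable def arcosh (t : ℝ) : ℝ := Real.log (t + Real.sqrt (t ^ 2 - 1))

lemma cosh_arcosh {t : ℝ} (ht : 1 ≤ t) : Real.cosh (arcosh t) = t := by
  have h1 : (0:ℝ) ≤ t ^ 2 - 1 := by nlinarith
  have hs := Real.sq_sqrt h1
  have hsn := Real.sqrt_nonneg (t ^ 2 - 1)
  have hu : 0 < t + Real.sqrt (t ^ 2 - 1) := by nlinarith
  rw [arcosh, Real.cosh_eq, Real.exp_log hu, Real.exp_neg, Real.exp_log hu]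
  field_simp
  nlinarith

lemma hasDerivAt_arcosh {t : ℝ} (ht : 1 < t) : HasDerivAt arcosh (1 / Real.sqrt (t ^ 2 - 1)) t := by
  have h1 : (0:ℝ) < t ^ 2 - 1 := by nlinarith
  have hsp : 0 < Real.sqrt (t ^ 2 - 1) := Real.sqrt_pos.mpr h1
  have hs := Real.sq_sqrt h1.le
  have hu : 0 < t + Real.sqrt (t ^ 2 - 1) := by nlinarith
  have hpoly : HasDerivAt (fun u : ℝ => u ^ 2 - 1) (2 * t) t := by
    simpa using (hasDerivAt_pow 2 t).sub_const 1
  have hsq : HasDerivAt (fun u : ℝ => Real.sqrt (u ^ 2 - 1)) (2 * t / (2 * Real.sqrt (t ^ 2 - 1))) t :=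
    hpoly.sqrt h1.ne'
  have hin : HasDerivAt (fun u : ℝ => u + Real.sqrt (u ^ 2 - 1))
      (1 + 2 * t / (2 * Real.sqrt (t ^ 2 - 1))) t := (hasDerivAt_id t).add hsq
  have := hin.log hu.ne'
  convert this using 1
  · rfl
  field_simp
  ring

lemma const_of_derivWithin_zero {f : ℝ → ℝ} {S : Set ℝ} (hS : Convex ℝ S)
    (hf : ∀ u ∈ S, HasDerivWithinAt f 0 S u) {p q : ℝ} (hp : p ∈ S) (hq : q ∈ S) :
    f p = f q := by
  have h := hS.norm_image_sub_le_of_norm_hasDerivWithin_le (C := 0) (f' := fun _ => (0:ℝ)) hf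
    (fun u _ => by simp) hq hp
  rw [zero_mul] at h
  have := norm_le_zero_iff.mp h
  linarith [sub_eq_zero.mp this]

/-- Zero-mean-curvature hyperbolic rotational surfaces of
second type in `𝕃³`: for a unit-speed Euclidean generatrix `(x, y)` with
`y > 0`, `x' > 0` and curvature `κ = x'/y` (i.e. `H = 0`), the quantity
`a = y·x'` is a positive constant, `y'² = (y² − a²)/y²` (so `y ≥ a` always),
and on every subinterval where `y'` does not vanish the curve is the graph
`x = x₀ ± a·arccosh(y/a)`, so the generated surface lies in the catenoid of
fifth kind `x₂² − x₃² = a²·cosh²((x₁ − x₀)/a)`. -/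
theorem zero_mean_curvature_hyperbolic_second_type
    (I : Set ℝ) (hIconn : I.OrdConnected)
    (x y x' y' x'' y'' : ℝ → ℝ)
    (hx : ∀ s ∈ I, HasDerivAt x (x' s) s)
    (hy : ∀ s ∈ I, HasDerivAt y (y' s) s)
    (hx' : ∀ s ∈ I, HasDerivAt x' (x'' s) s)
    (hy' : ∀ s ∈ I, HasDerivAt y' (y'' s) s)
    (hcx'' : ContinuousOn x'' I) (hcy'' : ContinuousOn y'' I)
    (hunit : ∀ s ∈ I, x' s ^ 2 + y' s ^ 2 = 1)
    (hypos : ∀ s ∈ I, 0 < y s)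
    (hx'pos : ∀ s ∈ I, 0 < x' s)
    (hH : ∀ s ∈ I, x' s * y'' s - x'' s * y' s = x' s / y s) :
    ∃ a : ℝ, 0 < a ∧
      (∀ s ∈ I, y s * x' s = a) ∧
      (∀ s ∈ I, y' s ^ 2 = (y s ^ 2 - a ^ 2) / y s ^ 2) ∧
      (∀ s ∈ I, a ≤ y s) ∧
      (∀ I' : Set ℝ, I' ⊆ I → I'.OrdConnected → (∀ s ∈ I', y' s ≠ 0) →
        ∃ x₀ σ : ℝ, (σ = 1 ∨ σ = -1) ∧
          (∀ s ∈ I', x s = x₀ + σ * a * arcosh (y s / a)) ∧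
          ∀ s ∈ I', ∀ t : ℝ,
            (y s * Real.cosh t) ^ 2 - (y s * Real.sinh t) ^ 2
              = a ^ 2 * Real.cosh ((x s - x₀) / a) ^ 2) := by
  classical
  have hconv : Convex ℝ I := convex_iff_ordConnected.mpr hIconn
  rcases Set.eq_empty_or_nonempty I with hIe | ⟨s₀, hs₀⟩
  · refine ⟨1, one_pos, ?_, ?_, ?_, ?_⟩
    · intro s hs; rw [hIe] at hs; exact absurd hs (Set.notMem_empty s)
    · intro s hs; rw [hIe] at hs; exact absurd hs (Set.notMem_empty s)
    · intro s hs; rw [hIe] at hs; exact absurd hs (Set.notMem_empty s)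
    · intro I' hsub _ _
      refine ⟨0, 1, Or.inl rfl, ?_, ?_⟩ <;> intro s hs <;>
        · have := hsub hs; rw [hIe] at this; exact absurd this (Set.notMem_empty s)
  · set a := y s₀ * x' s₀ with ha_def
    have ha : 0 < a := mul_pos (hypos s₀ hs₀) (hx'pos s₀ hs₀)
    -- constancy of y * x'
    have hconst : ∀ s ∈ I, y s * x' s = a := by
      by_cases hsub : ∀ s ∈ I, s = s₀
      · intro s hs; rw [hsub s hs]
      · push_neg at hsub
        obtain ⟨s₁, hs₁, hne1⟩ := hsub
        have hint : (interior I).Nonempty := by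
          have hss : Set.Icc (min s₁ s₀) (max s₁ s₀) ⊆ I := by
            rw [← Set.uIcc]; exact hIconn.uIcc_subset hs₁ hs₀
          have h2 : Set.Ioo (min s₁ s₀) (max s₁ s₀) ⊆ interior I := by
            rw [← interior_Icc]; exact interior_mono hss
          exact (Set.nonempty_Ioo.mpr (min_lt_max.mpr hne1)).mono h2
        have hud : UniqueDiffOn ℝ I := uniqueDiffOn_convex hconv hint
        have horth : ∀ s ∈ I, x' s * x'' s + y' s * y'' s = 0 := by
          intro s hs
          have hc : HasDerivWithinAt (fun u => x' u ^ 2 + y' u ^ 2)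
              ((2 : ℕ) * x' s ^ 1 * x'' s + (2 : ℕ) * y' s ^ 1 * y'' s) I s :=
            (((hx' s hs).pow 2).add ((hy' s hs).pow 2)).hasDerivWithinAt
          have hc0 : HasDerivWithinAt (fun u => x' u ^ 2 + y' u ^ 2) 0 I s :=
            (hasDerivWithinAt_const s I 1).congr (fun u hu => hunit u hu) (hunit s hs)
          have h1 := hc.derivWithin (hud s hs)
          have h2 := hc0.derivWithin (hud s hs)
          rw [h2] at h1
          push_cast at h1
          nlinarith [h1]
        have hfd : ∀ s ∈ I, HasDerivWithinAt (fun u => y u * x' u) 0 I s := by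
          intro s hs
          have h := (hy s hs).mul (hx' s hs)
          have hy0 : y s ≠ 0 := (hypos s hs).ne'
          have hA := hH s hs
          have hB := horth s hs
          have hu := hunit s hs
          have hA' : (x' s * y'' s - x'' s * y' s) * y s = x' s := by
            rw [hA, div_mul_cancel₀ _ hy0]
          have key : y' s * x' s + y s * x'' s = 0 := by
            linear_combination (x' s * y s) * hB - y' s * hA' - (x'' s * y s) * hu
          rw [key] at h
          exact h.hasDerivWithinAt
        intro s hs
        exact const_of_derivWithin_zero hconv hfd hs hs₀
    have hy'sq : ∀ s ∈ I, y' s ^ 2 = (y s ^ 2 - a ^ 2) / y s ^ 2 := by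
      intro s hs
      have hy0 : y s ≠ 0 := (hypos s hs).ne'
      have h1 := hconst s hs
      have h2 := hunit s hs
      rw [eq_div_iff (pow_ne_zero 2 hy0)]
      linear_combination (y s ^ 2) * h2 - (y s * x' s + a) * h1
    have hya : ∀ s ∈ I, a ≤ y s := by
      intro s hs
      have h2 := hunit s hs
      have := hconst s hs
      nlinarith [sq_nonneg (y' s), hypos s hs, hx'pos s hs]
    refine ⟨a, ha, hconst, hy'sq, hya, ?_⟩
    intro I' hsubI hconn' hy'ne
    have hconv' : Convex ℝ I' := convex_iff_ordConnected.mpr hconn'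
    rcases Set.eq_empty_or_nonempty I' with hIe' | ⟨s₁, hs₁⟩
    · refine ⟨0, 1, Or.inl rfl, ?_, ?_⟩ <;> intro s hs <;>
        · rw [hIe'] at hs; exact absurd hs (Set.notMem_empty s)
    · -- y' has constant sign on I'
      have hy'c : ContinuousOn y' I := fun s hs => (hy' s hs).continuousAt.continuousWithinAt
      have hsame : ∀ s ∈ I', ∀ t ∈ I', 0 < y' s * y' t := by
        intro s hs t ht
        by_contra hcon
        push_neg at hcon
        have hneg : y' s * y' t < 0 :=
          lt_of_le_of_ne hcon (mul_ne_zero (hy'ne s hs) (hy'ne t ht))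
        have hicc : Set.uIcc s t ⊆ I' := hconn'.uIcc_subset hs ht
        have hccy : ContinuousOn y' (Set.Icc (min s t) (max s t)) :=
          hy'c.mono ((hicc.trans hsubI).trans' (by rw [Set.uIcc]))
        have hz : ∃ c ∈ Set.Icc (min s t) (max s t), y' c = 0 := by
          rcases lt_or_gt_of_ne (hy'ne s hs) with hslt | hsgt
          · have htpos : 0 < y' t := by nlinarith
            rcases le_total s t with hst | hts
            · obtain ⟨c, hc, hc0⟩ := intermediate_value_Icc hst
                (by simpa [hst] using hccy) (Set.mem_Icc.mpr ⟨hslt.le, htpos.le⟩)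
              exact ⟨c, by simpa [hst] using hc, hc0⟩
            · obtain ⟨c, hc, hc0⟩ := intermediate_value_Icc' hts
                (by simpa [hts] using hccy) (Set.mem_Icc.mpr ⟨hslt.le, htpos.le⟩)
              exact ⟨c, by simpa [hts] using hc, hc0⟩
          · have htneg : y' t < 0 := by nlinarith
            rcases le_total s t with hst | hts
            · obtain ⟨c, hc, hc0⟩ := intermediate_value_Icc' hst
                (by simpa [hst] using hccy) (Set.mem_Icc.mpr ⟨htneg.le, hsgt.le⟩)
              exact ⟨c, by simpa [hst] using hc, hc0⟩
            · obtain ⟨c, hc, hc0⟩ := intermediate_value_Icc hts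
                (by simpa [hts] using hccy) (Set.mem_Icc.mpr ⟨htneg.le, hsgt.le⟩)
              exact ⟨c, by simpa [hts] using hc, hc0⟩
        obtain ⟨c, hc, hc0⟩ := hz
        exact hy'ne c (hicc (by rwa [Set.uIcc])) hc0
      set σ : ℝ := if 0 < y' s₁ then 1 else -1 with hσ_def
      have hσ : σ = 1 ∨ σ = -1 := by
        rw [hσ_def]; split_ifs <;> simp
      have hσy' : ∀ s ∈ I', 0 < σ * y' s := by
        intro s hs
        have := hsame s₁ hs₁ s hs
        rw [hσ_def]
        split_ifs with h
        · nlinarith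
        · push_neg at h
          have h1 : y' s₁ < 0 := lt_of_le_of_ne h (hy'ne s₁ hs₁)
          nlinarith
      -- y > a on I'
      have hygt : ∀ s ∈ I', a < y s := by
        intro s hs
        have h1 := hy'sq s (hsubI hs)
        have hy0 : (0:ℝ) < y s := hypos s (hsubI hs)
        have h2 : 0 < y' s ^ 2 := by
          have := abs_pos.mpr (hy'ne s hs)
          nlinarith [sq_abs (y' s)]
        have h4 : 0 < (y s ^ 2 - a ^ 2) / y s ^ 2 := h1 ▸ h2
        have h5 : 0 < y s ^ 2 - a ^ 2 := by
          have h6 := mul_pos h4 (pow_pos hy0 2)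
          rwa [div_mul_cancel₀ _ (pow_ne_zero 2 hy0.ne')] at h6
        nlinarith [h5, ha, hy0]
      have hσ2 : σ * σ = 1 := by rcases hσ with h | h <;> rw [h] <;> norm_num
      -- the function x - σ a arcosh (y/a) has zero derivative on I'
      have hg : ∀ s ∈ I', HasDerivAt (fun u => x u - σ * a * arcosh (y u / a)) 0 s := by
        intro s hs
        have hsI := hsubI hs
        have hy0 : (0:ℝ) < y s := hypos s hsI
        have hlt : 1 < y s / a := (one_lt_div ha).mpr (hygt s hs)
        have hdy : HasDerivAt (fun u => y u / a) (y' s / a) s := (hy s hsI).div_const a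
        have harc : HasDerivAt (fun u => arcosh (y u / a))
            (1 / Real.sqrt ((y s / a) ^ 2 - 1) * (y' s / a)) s :=
          (hasDerivAt_arcosh hlt).comp (h₂ := arcosh) s hdy
        have hd := (hx s hsI).sub (harc.const_mul (σ * a))
        refine hd.congr_deriv (Eq.symm ?_)
        have e : (σ * y' s * y s / a) ^ 2 = (y s / a) ^ 2 - 1 := by
          have h1 := hy'sq s hsI
          have h1' : y' s ^ 2 * y s ^ 2 = y s ^ 2 - a ^ 2 := by
            rw [h1]; field_simp
          field_simp
          linear_combination (y' s ^ 2 * y s ^ 2) * hσ2 + h1'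
        have hpos : 0 < σ * y' s * y s / a := div_pos (mul_pos (hσy' s hs) hy0) ha
        have hsq : Real.sqrt ((y s / a) ^ 2 - 1) = σ * y' s * y s / a := by
          rw [← e, Real.sqrt_sq hpos.le]
        rw [hsq]
        have hxa : x' s * y s = a := by rw [mul_comm]; exact hconst s hsI
        have hy'0 : y' s ≠ 0 := hy'ne s hs
        rcases hσ with h | h <;> rw [h] at * <;> field_simp <;> linear_combination (-1) * hxa
      set x₀ : ℝ := x s₁ - σ * a * arcosh (y s₁ / a) with hx₀_def
      have hgc : ∀ s ∈ I', x s - σ * a * arcosh (y s / a) = x₀ := fun s hs =>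
        const_of_derivWithin_zero hconv' (fun u hu => (hg u hu).hasDerivWithinAt) hs hs₁
      have hxeq : ∀ s ∈ I', x s = x₀ + σ * a * arcosh (y s / a) := by
        intro s hs; have := hgc s hs; linarith
      refine ⟨x₀, σ, hσ, hxeq, ?_⟩
      intro s hs t
      have hy0 : (0:ℝ) < y s := hypos s (hsubI hs)
      have hL : (y s * Real.cosh t) ^ 2 - (y s * Real.sinh t) ^ 2 = y s ^ 2 := by
        have h := Real.cosh_sq_sub_sinh_sq t
        linear_combination (y s ^ 2) * h
      rw [hL]
      have harg : (x s - x₀) / a = σ * arcosh (y s / a) := by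
        rw [hxeq s hs]; field_simp; ring
      rw [harg]
      have hcosh : Real.cosh (σ * arcosh (y s / a)) = y s / a := by
        have h1 : (1:ℝ) ≤ y s / a := le_of_lt ((one_lt_div ha).mpr (hygt s hs))
        rcases hσ with h | h <;> rw [h]
        · rw [one_mul, cosh_arcosh h1]
        · rw [neg_one_mul, Real.cosh_neg, cosh_arcosh h1]
      rw [hcosh]
      field_simp
end

section
/- Let ε ∈ {1, −1} and (u, v) : I → ℝ² twice continuously differentiable on an interval I with u'(s)·v'(s) = ε, v(s) > 0 and v'(s) > 0 for all s, and suppose the zero mean curvature condition ε(u''(s)v'(s) − u'(s)v''(s))/2 = v'(s)/v(s) holds for all s ∈ I (equivalently, v''(s) = −v'(s)²/v(s)). Then a := v(s)·v'(s) is a positive constant on I, and there exists u₀ ∈ ℝ such that u(s) = u₀ + ε·v(s)³/(3a²) for all s ∈ I; up to translation along the axis of revolution, the generated parabolic rotational surface is the Enneper surface of second kind {x₁² + x₂² − x₃² = (x₁ − x₃)⁴/(3a²)} if ε = 1, and the Enneper surface of third kind {x₁² + x₂² − x₃² = −(x₁ − x₃)⁴/(3a²)} if ε = −1. -/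
private lemma aux_final (ε a u₀ U V : ℝ) (ha : a ≠ 0)
    (hU : U = u₀ + ε * V ^ 3 / (3 * a ^ 2)) (t : ℝ) :
    ((U - u₀ + V * (1 - t ^ 2)) / 2) ^ 2 + (-t * V) ^ 2
      - ((U - u₀ - V * (1 + t ^ 2)) / 2) ^ 2 = ε * V ^ 4 / (3 * a ^ 2) := by
  subst hU
  field_simp
  ring

/-- Zero-mean-curvature parabolic rotational surfaces in
`𝕃³`: for a unit-speed generatrix `(u, v)` in null coordinates of causal
character `ε` with `v > 0`, `v' > 0` and curvature `κ = v'/v` (i.e. `H = 0`),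
the quantity `a = v·v'` is a positive constant and `u = u₀ + ε·v³/(3a²)` for
some `u₀`; up to translation along the axis of revolution, the generated
parabolic rotational surface is the Enneper surface of second kind
`x₁² + x₂² − x₃² = (x₁ − x₃)⁴/(3a²)` if `ε = 1`, and the Enneper surface of
third kind `x₁² + x₂² − x₃² = −(x₁ − x₃)⁴/(3a²)` if `ε = −1`. -/
theorem zero_mean_curvature_parabolic
    (ε : ℝ) (hε : ε = 1 ∨ ε = -1)
    (I : Set ℝ) (hIconn : I.OrdConnected)
    (u v u' v' u'' v'' : ℝ → ℝ)
    (hu : ∀ s ∈ I, HasDerivAt u (u' s) s)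
    (hv : ∀ s ∈ I, HasDerivAt v (v' s) s)
    (hu' : ∀ s ∈ I, HasDerivAt u' (u'' s) s)
    (hv' : ∀ s ∈ I, HasDerivAt v' (v'' s) s)
    (hcu'' : ContinuousOn u'' I) (hcv'' : ContinuousOn v'' I)
    (hunit : ∀ s ∈ I, u' s * v' s = ε)
    (hvpos : ∀ s ∈ I, 0 < v s)
    (hv'pos : ∀ s ∈ I, 0 < v' s)
    (hH : ∀ s ∈ I, ε * (u'' s * v' s - u' s * v'' s) / 2 = v' s / v s) :
    ∃ a : ℝ, 0 < a ∧
      (∀ s ∈ I, v s * v' s = a) ∧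
      ∃ u₀ : ℝ,
        (∀ s ∈ I, u s = u₀ + ε * v s ^ 3 / (3 * a ^ 2)) ∧
        -- after the translation `u ↦ u − u₀` along the axis of revolution, the
        -- surface point X(s,t) satisfies x₁² + x₂² − x₃² = ε(x₁ − x₃)⁴/(3a²)
        ∀ s ∈ I, ∀ t : ℝ,
          ((u s - u₀ + v s * (1 - t ^ 2)) / 2) ^ 2 + (-t * v s) ^ 2
              - ((u s - u₀ - v s * (1 + t ^ 2)) / 2) ^ 2
            = ε * (v s) ^ 4 / (3 * a ^ 2) := by
  have hε2 : ε * ε = 1 := by rcases hε with h | h <;> rw [h] <;> norm_num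
  have hconv : Convex ℝ I := hIconn.convex
  -- constancy helper
  have const_of : ∀ (f g : ℝ → ℝ), (∀ s ∈ I, HasDerivAt f (g s) s) →
      (∀ s ∈ I, g s = 0) → ∀ s ∈ I, ∀ s₀ ∈ I, f s = f s₀ := by
    intro f g hf hg s hs s₀ hs₀
    have hle := hconv.norm_image_sub_le_of_norm_hasDerivWithin_le (C := 0) (f' := g)
      (fun x hx => (hf x hx).hasDerivWithinAt)
      (fun x hx => by simp [hg x hx]) hs₀ hs
    have h0 : ‖f s - f s₀‖ ≤ 0 := by simpa using hle
    exact sub_eq_zero.mp (norm_le_zero_iff.mp h0)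
  rcases Set.eq_empty_or_nonempty I with hIe | ⟨s₀, hs₀⟩
  · exact ⟨1, one_pos, fun s hs => absurd hs (by simp [hIe]), 0,
      fun s hs => absurd hs (by simp [hIe]), fun s hs => absurd hs (by simp [hIe])⟩
  set a : ℝ := v s₀ * v' s₀ with ha_def
  have ha : 0 < a := mul_pos (hvpos s₀ hs₀) (hv'pos s₀ hs₀)
  set u₀ : ℝ := u s₀ - ε * v s₀ ^ 3 / (3 * a ^ 2) with hu₀_def
  have ha2 : (3 : ℝ) * a ^ 2 ≠ 0 := by positivity
  by_cases hsub : ∀ s ∈ I, s = s₀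
  · refine ⟨a, ha, fun s hs => by rw [hsub s hs], u₀, fun s hs => by rw [hsub s hs]; ring,
      fun s hs t => ?_⟩
    exact aux_final ε a u₀ (u s) (v s) ha.ne' (by rw [hsub s hs]; ring) t
  · push_neg at hsub
    obtain ⟨s₁, hs₁, hne⟩ := hsub
    have hint : (interior I).Nonempty := by
      rcases hne.lt_or_gt with h | h
      · exact ⟨(s₁ + s₀) / 2, interior_maximal
          (fun x hx => hIconn.out hs₁ hs₀ ⟨hx.1.le, hx.2.le⟩) isOpen_Ioo
          ⟨by linarith, by linarith⟩⟩
      · exact ⟨(s₀ + s₁) / 2, interior_maximal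
          (fun x hx => hIconn.out hs₀ hs₁ ⟨hx.1.le, hx.2.le⟩) isOpen_Ioo
          ⟨by linarith, by linarith⟩⟩
    have huniq : ∀ s ∈ I, UniqueDiffWithinAt ℝ I s := fun s hs =>
      uniqueDiffWithinAt_convex hconv hint (subset_closure hs)
    -- differentiate the unit-speed relation
    have key : ∀ s ∈ I, u'' s * v' s + u' s * v'' s = 0 := by
      intro s hs
      have h1 : HasDerivWithinAt (fun s => u' s * v' s)
          (u'' s * v' s + u' s * v'' s) I s :=
        ((hu' s hs).mul (hv' s hs)).hasDerivWithinAt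
      have h2 : HasDerivWithinAt (fun s => u' s * v' s) 0 I s :=
        (hasDerivWithinAt_const s I ε).congr (fun y hy => hunit y hy) (hunit s hs)
      exact (h1.derivWithin (huniq s hs)).symm.trans (h2.derivWithin (huniq s hs))
    -- v'^2 + v v'' = 0
    have hvv : ∀ s ∈ I, v' s * v' s + v s * v'' s = 0 := by
      intro s hs
      have h1 := key s hs
      have h2 := hH s hs
      have h3 := hunit s hs
      have hv0 := (hvpos s hs).ne'
      field_simp at h2
      linear_combination (ε * v s * v' s / 2) * h1 - (v' s / 2) * h2
        - ε * v s * v'' s * h3 - v s * v'' s * hε2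
    have P1 : ∀ s ∈ I, v s * v' s = a := by
      intro s hs
      have := const_of (fun s => v s * v' s) (fun s => v' s * v' s + v s * v'' s)
        (fun s hs => (hv s hs).mul (hv' s hs)) hvv s hs s₀ hs₀
      simpa [ha_def] using this
    have P2 : ∀ s ∈ I, u s = u₀ + ε * v s ^ 3 / (3 * a ^ 2) := by
      have hF : ∀ s ∈ I, HasDerivAt (fun s => u s - ε / (3 * a ^ 2) * v s ^ 3)
          (u' s - ε / (3 * a ^ 2) * (3 * v s ^ 2 * v' s)) s := by
        intro s hs
        exact (hu s hs).sub ((((hv s hs).pow 3)).const_mul (ε / (3 * a ^ 2)))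
      have hF0 : ∀ s ∈ I, u' s - ε / (3 * a ^ 2) * (3 * v s ^ 2 * v' s) = 0 := by
        intro s hs
        have h3 := hunit s hs
        have hP := P1 s hs
        have hv'0 := (hv'pos s hs).ne'
        field_simp
        linear_combination (v s ^ 2 * v' s) * h3 - u' s * (v s * v' s + a) * hP
          - u' s * (a + v s₀ * v' s₀) * ha_def
      intro s hs
      have := const_of _ _ hF hF0 s hs s₀ hs₀
      have h : u s - ε / (3 * a ^ 2) * v s ^ 3 = u s₀ - ε / (3 * a ^ 2) * v s₀ ^ 3 := this
      rw [hu₀_def]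
      field_simp at h ⊢
      linarith
    exact ⟨a, ha, P1, u₀, P2, fun s hs t =>
      aux_final ε a u₀ (u s) (v s) ha.ne' (P2 s hs) t⟩
end

section
/- Let μ ≠ 0 be a real number and I ⊆ (0, ∞) an interval. A differentiable function 𝒦 : I → ℝ satisfies the ordinary differential equation 𝒦'(r) = μ·𝒦(r)²/r² for all r ∈ I if and only if either 𝒦 is identically zero on I, or there exists c ∈ ℝ such that μ + c·r ≠ 0 for all r ∈ I and 𝒦(r) = r/(μ + c·r) for all r ∈ I. In particular, setting k_m(r) := 𝒦'(r) and k_p(r) := 𝒦(r)/r, the quadratic Weingarten relation k_m = μ·k_p² holds on I exactly for these momenta. -/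
open Set Filter Topology

/-- On a closed subinterval of `I` where `K` does not vanish, the quantity
`1/K - μ/r` is constant. -/
lemma qw_aux_const (μ : ℝ)
    (I : Set ℝ) (hIpos : I ⊆ Set.Ioi (0 : ℝ))
    (K K' : ℝ → ℝ)
    (hK : ∀ r ∈ I, HasDerivAt K (K' r) r)
    (hODE : ∀ r ∈ I, K' r = μ * K r ^ 2 / r ^ 2)
    (x y : ℝ) (hxy : x ≤ y) (hsub : Icc x y ⊆ I)
    (hne : ∀ t ∈ Icc x y, K t ≠ 0) :
    (K y)⁻¹ - μ * y⁻¹ = (K x)⁻¹ - μ * x⁻¹ := by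
  have hcont : ContinuousOn (fun t => (K t)⁻¹ - μ * t⁻¹) (Icc x y) := by
    intro t ht
    have htI : t ∈ I := hsub ht
    have htpos : (0 : ℝ) < t := hIpos htI
    exact (((hK t htI).continuousAt.continuousWithinAt).inv₀ (hne t ht)).sub
      ((continuousWithinAt_id.inv₀ htpos.ne').const_smul μ)
  have hderiv : ∀ t ∈ Ico x y, HasDerivWithinAt (fun t => (K t)⁻¹ - μ * t⁻¹) 0 (Ici t) t := by
    intro t ht
    have htIcc : t ∈ Icc x y := ⟨ht.1, ht.2.le⟩
    have htI : t ∈ I := hsub htIcc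
    have htpos : (0 : ℝ) < t := hIpos htI
    have htne : K t ≠ 0 := hne t htIcc
    have h1 : HasDerivAt (fun t => (K t)⁻¹) (-K' t / K t ^ 2) t := (hK t htI).inv htne
    have h2 : HasDerivAt (fun t : ℝ => μ * t⁻¹) (μ * (-(t ^ 2)⁻¹)) t :=
      (hasDerivAt_inv htpos.ne').const_mul μ
    have h3 := h1.sub h2
    have : -K' t / K t ^ 2 - μ * (-(t ^ 2)⁻¹) = 0 := by
      rw [hODE t htI]
      field_simp
      ring
    rw [this] at h3
    exact h3.hasDerivWithinAt
  have := constant_of_has_deriv_right_zero hcont hderiv y (right_mem_Icc.2 hxy)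
  simpa using this

/-- For `μ ≠ 0` and an interval `I ⊆ (0, ∞)`, a differentiable
function `𝒦 : I → ℝ` satisfies the ODE `𝒦'(r) = μ·𝒦(r)²/r²` on `I` (the
quadratic Weingarten relation `k_m = μ·k_p²` with `k_m = 𝒦'` and `k_p = 𝒦/r`)
if and only if either `𝒦 ≡ 0` on `I`, or there is `c ∈ ℝ` with `μ + c·r ≠ 0`
on `I` and `𝒦(r) = r/(μ + c·r)` on `I`. -/
theorem quadratic_weingarten_momentum_ode
    (μ : ℝ) (hμ : μ ≠ 0)
    (I : Set ℝ) (hIopen : IsOpen I) (hIconn : I.OrdConnected)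
    (hIpos : I ⊆ Set.Ioi (0 : ℝ))
    (K K' : ℝ → ℝ)
    (hK : ∀ r ∈ I, HasDerivAt K (K' r) r) :
    (∀ r ∈ I, K' r = μ * K r ^ 2 / r ^ 2) ↔
      ((∀ r ∈ I, K r = 0) ∨
        ∃ c : ℝ, (∀ r ∈ I, μ + c * r ≠ 0) ∧ ∀ r ∈ I, K r = r / (μ + c * r)) := by
  constructor
  · -- forward direction
    intro hODE
    by_cases h0 : ∀ r ∈ I, K r = 0
    · exact Or.inl h0
    push_neg at h0
    obtain ⟨a, haI, haK⟩ := h0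
    have hapos : (0 : ℝ) < a := hIpos haI
    set c : ℝ := (K a)⁻¹ - μ * a⁻¹ with hc
    -- Key claim: K never vanishes on I
    have hnz : ∀ b ∈ I, K b ≠ 0 := by
      intro b hbI hKb
      have hbpos : (0 : ℝ) < b := hIpos hbI
      rcases lt_trichotomy a b with hab | hab | hab
      · -- a < b, zeros above a
        have hIccI : Icc a b ⊆ I := hIconn.out haI hbI
        have hcontK : ContinuousOn K (Icc a b) := fun t ht =>
          (hK t (hIccI ht)).continuousAt.continuousWithinAt
        set Z : Set ℝ := {t ∈ Icc a b | K t = 0} with hZ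
        have hZne : Z.Nonempty := ⟨b, ⟨le_of_lt hab, le_refl b⟩, hKb⟩
        have hZbdd : BddBelow Z := ⟨a, fun t ht => ht.1.1⟩
        have hZclosed : IsClosed Z := by
          have : Z = Icc a b ∩ K ⁻¹' {0} := by
            ext t; simp [hZ, and_comm]
          rw [this]
          exact hcontK.preimage_isClosed_of_isClosed isClosed_Icc isClosed_singleton
        set b' := sInf Z with hb'
        have hb'Z : b' ∈ Z := hZclosed.csInf_mem hZne hZbdd
        have hb'Icc : b' ∈ Icc a b := hb'Z.1
        have hKb' : K b' = 0 := hb'Z.2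
        have hb'I : b' ∈ I := hIccI hb'Icc
        have hab' : a < b' := lt_of_le_of_ne hb'Icc.1 (by
          intro h; exact haK (h ▸ hKb'))
        -- on [a, b') we have (μ + c t) * K t = t
        have hkey : ∀ t ∈ Ico a b', (μ + c * t) * K t = t := by
          intro t ht
          have htI : t ∈ I := hIccI ⟨ht.1, ht.2.le.trans hb'Icc.2⟩
          have htpos : (0 : ℝ) < t := hIpos htI
          have hne : ∀ s ∈ Icc a t, K s ≠ 0 := by
            intro s hs hKs
            have hsZ : s ∈ Z := ⟨⟨hs.1, hs.2.trans (ht.2.le.trans hb'Icc.2)⟩, hKs⟩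
            exact absurd (csInf_le hZbdd hsZ) (not_le.2 (lt_of_le_of_lt hs.2 ht.2))
          have hIcc : Icc a t ⊆ I := fun s hs =>
            hIccI ⟨hs.1, hs.2.trans (ht.2.le.trans hb'Icc.2)⟩
          have h := qw_aux_const μ I hIpos K K' hK hODE a t ht.1 hIcc hne
          have hKt : K t ≠ 0 := hne t (right_mem_Icc.2 ht.1)
          -- h : (K t)⁻¹ - μ * t⁻¹ = (K a)⁻¹ - μ * a⁻¹ = c
          have h2 : (K t)⁻¹ = μ * t⁻¹ + c := by rw [hc]; linarith [h]
          field_simp [hKt, htpos.ne'] at h2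
          linarith [h2]
        -- take limit t → b'⁻
        have hcl : b' ∈ closure (Ico a b') := by
          rw [closure_Ico hab'.ne]
          exact right_mem_Icc.2 hab'.le
        have hNeBot : (𝓝[Ico a b'] b').NeBot := mem_closure_iff_nhdsWithin_neBot.1 hcl
        have h1 : Tendsto (fun t => (μ + c * t) * K t) (𝓝[Ico a b'] b')
            (𝓝 ((μ + c * b') * K b')) := by
          apply Tendsto.mono_left _ nhdsWithin_le_nhds
          exact (((continuous_const.add (continuous_const.mul continuous_id)).continuousAt).mul
            (hK b' hb'I).continuousAt).tendsto
        have h2 : Tendsto (fun t => (μ + c * t) * K t) (𝓝[Ico a b'] b') (𝓝 b') := by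
          have : Tendsto (fun t : ℝ => t) (𝓝[Ico a b'] b') (𝓝 b') :=
            tendsto_id.mono_left nhdsWithin_le_nhds
          refine this.congr' ?_
          filter_upwards [self_mem_nhdsWithin] with t ht
          exact (hkey t ht).symm
        have := tendsto_nhds_unique h1 h2
        rw [hKb', mul_zero] at this
        have hb'pos : (0 : ℝ) < b' := hIpos hb'I
        linarith
      · exact haK (hab ▸ hKb)
      · -- b < a, zeros below a
        have hIccI : Icc b a ⊆ I := hIconn.out hbI haI
        have hcontK : ContinuousOn K (Icc b a) := fun t ht =>
          (hK t (hIccI ht)).continuousAt.continuousWithinAt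
        set Z : Set ℝ := {t ∈ Icc b a | K t = 0} with hZ
        have hZne : Z.Nonempty := ⟨b, ⟨le_refl b, le_of_lt hab⟩, hKb⟩
        have hZbdd : BddAbove Z := ⟨a, fun t ht => ht.1.2⟩
        have hZclosed : IsClosed Z := by
          have : Z = Icc b a ∩ K ⁻¹' {0} := by
            ext t; simp [hZ, and_comm]
          rw [this]
          exact hcontK.preimage_isClosed_of_isClosed isClosed_Icc isClosed_singleton
        set b' := sSup Z with hb'
        have hb'Z : b' ∈ Z := hZclosed.csSup_mem hZne hZbdd
        have hb'Icc : b' ∈ Icc b a := hb'Z.1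
        have hKb' : K b' = 0 := hb'Z.2
        have hb'I : b' ∈ I := hIccI hb'Icc
        have hab' : b' < a := lt_of_le_of_ne hb'Icc.2 (by
          intro h; exact haK (h ▸ hKb'))
        have hkey : ∀ t ∈ Ioc b' a, (μ + c * t) * K t = t := by
          intro t ht
          have htI : t ∈ I := hIccI ⟨hb'Icc.1.trans ht.1.le, ht.2⟩
          have htpos : (0 : ℝ) < t := hIpos htI
          have hne : ∀ s ∈ Icc t a, K s ≠ 0 := by
            intro s hs hKs
            have hsZ : s ∈ Z := ⟨⟨hb'Icc.1.trans (ht.1.le.trans hs.1), hs.2⟩, hKs⟩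
            exact absurd (le_csSup hZbdd hsZ) (not_le.2 (lt_of_lt_of_le ht.1 hs.1))
          have hIcc : Icc t a ⊆ I := fun s hs =>
            hIccI ⟨hb'Icc.1.trans (ht.1.le.trans hs.1), hs.2⟩
          have h := qw_aux_const μ I hIpos K K' hK hODE t a ht.2 hIcc hne
          have hKt : K t ≠ 0 := hne t (left_mem_Icc.2 ht.2)
          have h2 : (K t)⁻¹ = μ * t⁻¹ + c := by rw [hc]; linarith [h]
          field_simp [hKt, htpos.ne'] at h2
          linarith [h2]
        have hcl : b' ∈ closure (Ioc b' a) := by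
          rw [closure_Ioc hab'.ne]
          exact left_mem_Icc.2 hab'.le
        have hNeBot : (𝓝[Ioc b' a] b').NeBot := mem_closure_iff_nhdsWithin_neBot.1 hcl
        have h1 : Tendsto (fun t => (μ + c * t) * K t) (𝓝[Ioc b' a] b')
            (𝓝 ((μ + c * b') * K b')) := by
          apply Tendsto.mono_left _ nhdsWithin_le_nhds
          exact (((continuous_const.add (continuous_const.mul continuous_id)).continuousAt).mul
            (hK b' hb'I).continuousAt).tendsto
        have h2 : Tendsto (fun t => (μ + c * t) * K t) (𝓝[Ioc b' a] b') (𝓝 b') := by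
          have : Tendsto (fun t : ℝ => t) (𝓝[Ioc b' a] b') (𝓝 b') :=
            tendsto_id.mono_left nhdsWithin_le_nhds
          refine this.congr' ?_
          filter_upwards [self_mem_nhdsWithin] with t ht
          exact (hkey t ht).symm
        have := tendsto_nhds_unique h1 h2
        rw [hKb', mul_zero] at this
        have hb'pos : (0 : ℝ) < b' := hIpos hb'I
        linarith
    -- now K never vanishes; derive the formula
    refine Or.inr ⟨c, ?_, ?_⟩
    all_goals
      intro r hrI
      have hrpos : (0 : ℝ) < r := hIpos hrI
      have hKr : K r ≠ 0 := hnz r hrI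
      have hrel : (K r)⁻¹ = μ * r⁻¹ + c := by
        rcases le_total a r with h | h
        · have hIcc : Icc a r ⊆ I := hIconn.out haI hrI
          have hne : ∀ s ∈ Icc a r, K s ≠ 0 := fun s hs => hnz s (hIcc hs)
          have := qw_aux_const μ I hIpos K K' hK hODE a r h hIcc hne
          rw [hc]; linarith [this]
        · have hIcc : Icc r a ⊆ I := hIconn.out hrI haI
          have hne : ∀ s ∈ Icc r a, K s ≠ 0 := fun s hs => hnz s (hIcc hs)
          have := qw_aux_const μ I hIpos K K' hK hODE r a h hIcc hne
          rw [hc]; linarith [this]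
      have hmain : (μ + c * r) * K r = r := by
        field_simp [hKr, hrpos.ne'] at hrel
        linarith [hrel]
    · -- μ + c * r ≠ 0
      intro h
      rw [h, zero_mul] at hmain
      exact hrpos.ne hmain
    · -- K r = r / (μ + c * r)
      have hden : μ + c * r ≠ 0 := by
        intro h
        rw [h, zero_mul] at hmain
        exact hrpos.ne hmain
      rw [eq_div_iff hden]
      linarith [hmain]
  · -- reverse direction
    rintro (h0 | ⟨c, hden, hform⟩) r hrI
    · -- K ≡ 0
      have hev : K =ᶠ[𝓝 r] fun _ => (0 : ℝ) := by
        filter_upwards [hIopen.mem_nhds hrI] with t ht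
        exact h0 t ht
      have : HasDerivAt K 0 r := (hasDerivAt_const r (0 : ℝ)).congr_of_eventuallyEq hev
      rw [(hK r hrI).unique this, h0 r hrI]
      simp
    · -- K r = r / (μ + c r)
      have hrpos : (0 : ℝ) < r := hIpos hrI
      have hdr : μ + c * r ≠ 0 := hden r hrI
      have hg : HasDerivAt (fun t : ℝ => t / (μ + c * t)) (μ / (μ + c * r) ^ 2) r := by
        have h1 : HasDerivAt (fun t : ℝ => t) 1 r := hasDerivAt_id r
        have h2 : HasDerivAt (fun t : ℝ => μ + c * t) c r := by
          exact ((hasDerivAt_const r μ).add ((hasDerivAt_id r).const_mul c)).congr_deriv (by simp)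
        have := h1.div h2 hdr
        exact this.congr_deriv (by ring)
      have hev : K =ᶠ[𝓝 r] fun t => t / (μ + c * t) := by
        filter_upwards [hIopen.mem_nhds hrI] with t ht
        exact hform t ht
      have hKd : HasDerivAt K (μ / (μ + c * r) ^ 2) r := hg.congr_of_eventuallyEq hev
      rw [(hK r hrI).unique hKd, hform r hrI]
      field_simp
end

section
/- Let μ ≠ 0 be a real number and I ⊆ (0, ∞) an interval. A differentiable function 𝒦 : I → ℝ satisfies the ordinary differential equation 𝒦'(r) = μ·𝒦(r)³/r³ for all r ∈ I if and only if either 𝒦 is identically zero on I, or there exist c ∈ ℝ and σ ∈ {1, −1} such that μ + c·r² > 0 for all r ∈ I and 𝒦(r) = σ·r/√(μ + c·r²) for all r ∈ I. In particular, setting k_m(r) := 𝒦'(r) and k_p(r) := 𝒦(r)/r, the cubic Weingarten relation k_m = μ·k_p³ holds on I exactly for these momenta (the momenta of the non-degenerate quadric surfaces of revolution in 𝕃³). -/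
open Set
lemma formula_hasDerivAt (μ c σ r : ℝ) (hr : 0 < r) (hu : 0 < μ + c * r ^ 2) :
    HasDerivAt (fun x => σ * x / Real.sqrt (μ + c * x ^ 2))
      (σ * μ / Real.sqrt (μ + c * r ^ 2) ^ 3) r := by
  have hs : Real.sqrt (μ + c * r ^ 2) ≠ 0 := (Real.sqrt_pos.mpr hu).ne'
  have hu' : HasDerivAt (fun x : ℝ => μ + c * x ^ 2) (c * (2 * r)) r := by
    simpa using ((hasDerivAt_pow 2 r).const_mul c).const_add μ
  have hsq : HasDerivAt (fun x => Real.sqrt (μ + c * x ^ 2))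
      (1 / (2 * Real.sqrt (μ + c * r ^ 2)) * (c * (2 * r))) r :=
    (Real.hasDerivAt_sqrt hu.ne').comp r hu'
  have hnum : HasDerivAt (fun x : ℝ => σ * x) σ r := by
    simpa using (hasDerivAt_id r).const_mul σ
  have : HasDerivAt (fun x => σ * x / Real.sqrt (μ + c * x ^ 2)) _ r := hnum.div hsq hs
  convert this using 1
  have h2 : Real.sqrt (μ + c * r ^ 2) ^ 2 = μ + c * r ^ 2 := Real.sq_sqrt hu.le
  set s := Real.sqrt (μ + c * r ^ 2) with hsdef
  field_simp
  linear_combination (-σ) * h2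

lemma zero_propagation (μ : ℝ) (I : Set ℝ) (hIopen : IsOpen I) (hIconn : I.OrdConnected)
    (hIpos : I ⊆ Set.Ioi (0:ℝ)) (K K' : ℝ → ℝ)
    (hK : ∀ r ∈ I, HasDerivAt K (K' r) r)
    (hODE : ∀ r ∈ I, K' r = μ * K r ^ 3 / r ^ 3)
    {r₀ : ℝ} (hr₀ : r₀ ∈ I) (hK0 : K r₀ = 0) :
    ∀ r ∈ I, K r = 0 := by
  intro r₁ hr₁
  obtain ⟨ε₀, hε₀, hb₀⟩ := Metric.isOpen_iff.mp hIopen r₀ hr₀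
  obtain ⟨ε₁, hε₁, hb₁⟩ := Metric.isOpen_iff.mp hIopen r₁ hr₁
  set ε : ℝ := min ε₀ ε₁ / 2 with hε
  have hεpos : 0 < ε := by positivity
  have hεlt₀ : ε < ε₀ := by
    have := min_le_left ε₀ ε₁; simp only [hε]; linarith [lt_min hε₀ hε₁]
  have hεlt₁ : ε < ε₁ := by
    have := min_le_right ε₀ ε₁; simp only [hε]; linarith [lt_min hε₀ hε₁]
  set a : ℝ := min r₀ r₁ - ε with ha
  set b : ℝ := max r₀ r₁ + ε with hb
  have haI : a ∈ I := by
    rcases min_cases r₀ r₁ with ⟨h, _⟩ | ⟨h, _⟩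
    · apply hb₀; rw [Metric.mem_ball, ha, h, Real.dist_eq, abs_of_nonpos (by linarith)]; linarith
    · apply hb₁; rw [Metric.mem_ball, ha, h, Real.dist_eq, abs_of_nonpos (by linarith)]; linarith
  have hbI : b ∈ I := by
    rcases max_cases r₀ r₁ with ⟨h, _⟩ | ⟨h, _⟩
    · apply hb₀; rw [Metric.mem_ball, hb, h, Real.dist_eq, abs_of_nonneg (by linarith)]; linarith
    · apply hb₁; rw [Metric.mem_ball, hb, h, Real.dist_eq, abs_of_nonneg (by linarith)]; linarith
  have hsub : Icc a b ⊆ I := hIconn.out haI hbI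
  have hapos : 0 < a := hIpos haI
  have hab : a ≤ b := by
    rw [ha, hb]; linarith [min_le_max (a := r₀) (b := r₁)]
  have hr₀m : r₀ ∈ Ioo a b := by
    constructor
    · have : a < min r₀ r₁ := by rw [ha]; linarith
      exact lt_of_lt_of_le this (min_le_left _ _)
    · have : max r₀ r₁ < b := by rw [hb]; linarith
      exact lt_of_le_of_lt (le_max_left _ _) this
  have hr₁m : r₁ ∈ Ioo a b := by
    constructor
    · have : a < min r₀ r₁ := by rw [ha]; linarith
      exact lt_of_lt_of_le this (min_le_right _ _)
    · have : max r₀ r₁ < b := by rw [hb]; linarith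
      exact lt_of_le_of_lt (le_max_right _ _) this
  have hcont : ContinuousOn K (Icc a b) := fun x hx =>
    (hK x (hsub hx)).continuousAt.continuousWithinAt
  obtain ⟨C, hC⟩ := (isCompact_Icc).exists_bound_of_continuousOn hcont
  have hC0 : 0 ≤ C := le_trans (norm_nonneg _) (hC a ⟨le_rfl, hab⟩)
  set v : ℝ → ℝ → ℝ := fun t x => μ * x ^ 3 / (max t a) ^ 3 with hv
  set s : ℝ → Set ℝ := fun _ => Metric.closedBall (0:ℝ) C with hsdef
  set L : NNReal := Real.toNNReal (3 * |μ| * C ^ 2 / a ^ 3) with hL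
  have hLcoe : (L : ℝ) = 3 * |μ| * C ^ 2 / a ^ 3 := Real.coe_toNNReal _ (by positivity)
  have hlip : ∀ t, LipschitzOnWith L (v t) (s t) := by
    intro t
    apply LipschitzOnWith.of_dist_le_mul
    intro x hx y hy
    rw [hsdef] at hx hy
    simp only [Metric.mem_closedBall, Real.dist_eq, sub_zero] at hx hy
    have hcpos : (0:ℝ) < max t a := lt_of_lt_of_le hapos (le_max_right _ _)
    have hca : a ≤ max t a := le_max_right _ _
    rw [Real.dist_eq, Real.dist_eq, hLcoe]
    have hexp : v t x - v t y = μ * (x - y) * (x ^ 2 + x * y + y ^ 2) / (max t a) ^ 3 := by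
      rw [hv]; field_simp; ring
    rw [hexp, abs_div, abs_of_pos (by positivity : (0:ℝ) < (max t a)^3), abs_mul, abs_mul]
    rw [div_mul_eq_mul_div]
    apply div_le_div₀ (by positivity)
    · have h3 : |x ^ 2 + x * y + y ^ 2| ≤ 3 * C ^ 2 := by
        have h1 : |x * y| ≤ C ^ 2 := by
          rw [abs_mul]; nlinarith [abs_nonneg x, abs_nonneg y]
        have h2 : x ^ 2 ≤ C ^ 2 := by nlinarith [abs_nonneg x, sq_abs x]
        have h2' : y ^ 2 ≤ C ^ 2 := by nlinarith [abs_nonneg y, sq_abs y]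
        calc |x ^ 2 + x * y + y ^ 2| ≤ x ^ 2 + |x * y| + y ^ 2 := by
              have := abs_add_le (x ^ 2 + x * y) (y ^ 2)
              have := abs_add_le (x ^ 2) (x * y)
              simp only [abs_pow, sq_abs] at *
              calc |x ^ 2 + x * y + y ^ 2| ≤ |x ^ 2 + x * y| + |y ^ 2| := abs_add_le _ _
                _ ≤ |x ^ 2| + |x * y| + |y ^ 2| := by linarith [abs_add_le (x^2) (x*y)]
                _ = x ^ 2 + |x * y| + y ^ 2 := by rw [abs_pow, sq_abs, abs_pow, sq_abs]
          _ ≤ 3 * C ^ 2 := by linarith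
      calc |μ| * |x - y| * |x ^ 2 + x * y + y ^ 2| ≤ |μ| * |x - y| * (3 * C ^ 2) := by
            apply mul_le_mul_of_nonneg_left h3 (by positivity)
        _ = 3 * |μ| * C ^ 2 * |x - y| := by ring
    · positivity
    · exact pow_le_pow_left₀ hapos.le hca 3
  have hf' : ∀ t ∈ Ioo a b, HasDerivAt K (v t (K t)) t := by
    intro t ht
    have htI : t ∈ I := hsub ⟨ht.1.le, ht.2.le⟩
    have : v t (K t) = K' t := by
      rw [hv]; simp only [max_eq_left ht.1.le]; rw [hODE t htI]
    rw [this]; exact hK t htI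
  have hfs : ∀ t ∈ Ioo a b, K t ∈ s t := by
    intro t ht
    simp only [hsdef, Metric.mem_closedBall, Real.dist_eq, sub_zero]
    exact hC t ⟨ht.1.le, ht.2.le⟩
  have hg' : ∀ t ∈ Ioo a b, HasDerivAt (fun _ : ℝ => (0:ℝ)) (v t 0) t := by
    intro t ht
    have : v t 0 = 0 := by rw [hv]; simp
    rw [this]; exact hasDerivAt_const t 0
  have hgs : ∀ t ∈ Ioo a b, (0:ℝ) ∈ s t := by
    intro t _; simp [hsdef, hC0]
  have heq := ODE_solution_unique_of_mem_Icc (fun t _ => hlip t) hr₀m hcont hf' hfs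
    (continuousOn_const) hg' hgs (by simpa using hK0)
  exact heq ⟨hr₁m.1.le, hr₁m.2.le⟩

/-- For `μ ≠ 0` and an interval `I ⊆ (0, ∞)`, a differentiable
function `𝒦 : I → ℝ` satisfies the ODE `𝒦'(r) = μ·𝒦(r)³/r³` on `I` (the cubic
Weingarten relation `k_m = μ·k_p³` with `k_m = 𝒦'` and `k_p = 𝒦/r`) if and
only if either `𝒦 ≡ 0` on `I`, or there are `c ∈ ℝ` and `σ ∈ {1, −1}` with
`μ + c·r² > 0` on `I` and `𝒦(r) = σ·r/√(μ + c·r²)` on `I` (the momenta of the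
non-degenerate quadric surfaces of revolution in `𝕃³`). -/
theorem cubic_weingarten_momentum_ode
    (μ : ℝ) (hμ : μ ≠ 0)
    (I : Set ℝ) (hIopen : IsOpen I) (hIconn : I.OrdConnected)
    (hIpos : I ⊆ Set.Ioi (0 : ℝ))
    (K K' : ℝ → ℝ)
    (hK : ∀ r ∈ I, HasDerivAt K (K' r) r) :
    (∀ r ∈ I, K' r = μ * K r ^ 3 / r ^ 3) ↔
      ((∀ r ∈ I, K r = 0) ∨
        ∃ c σ : ℝ, (σ = 1 ∨ σ = -1) ∧ (∀ r ∈ I, 0 < μ + c * r ^ 2) ∧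
          ∀ r ∈ I, K r = σ * r / Real.sqrt (μ + c * r ^ 2)) := by
  constructor
  · intro hODE
    rcases Set.eq_empty_or_nonempty I with hIe | ⟨r₀, hr₀⟩
    · left; intro r hr; rw [hIe] at hr; exact absurd hr (Set.notMem_empty r)
    by_cases hz : ∃ r ∈ I, K r = 0
    · obtain ⟨rz, hrz, hKz⟩ := hz
      exact Or.inl (zero_propagation μ I hIopen hIconn hIpos K K' hK hODE hrz hKz)
    push_neg at hz
    right
    set h : ℝ → ℝ := fun x => ((K x) ^ 2)⁻¹ - μ * ((x ^ 2)⁻¹) with hh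
    have hderiv : ∀ r ∈ I, HasDerivAt h 0 r := by
      intro r hr
      have hrpos : (0:ℝ) < r := hIpos hr
      have hKne : K r ≠ 0 := hz r hr
      have hinv : HasDerivAt (fun x => ((K x) ^ 2)⁻¹)
          (-(2 * K r * K' r) / ((K r) ^ 2) ^ 2) r := by
        have h2 := (hK r hr).pow 2
        have : HasDerivAt (fun x => ((K x) ^ 2)⁻¹) _ r := h2.inv (pow_ne_zero 2 hKne)
        convert this using 1
        push_cast [Pi.pow_apply]
        ring
      have hmu : HasDerivAt (fun x : ℝ => μ * ((x ^ 2)⁻¹))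
          (μ * (-(2 * r) / (r ^ 2) ^ 2)) r := by
        have h2 : HasDerivAt (fun x : ℝ => x ^ 2) (2 * r) r := by
          simpa using hasDerivAt_pow 2 r
        exact ((h2.inv (pow_ne_zero _ hrpos.ne')).const_mul μ)
      have hD := hinv.sub hmu
      have hDval : -(2 * K r * K' r) / ((K r) ^ 2) ^ 2 - μ * (-(2 * r) / (r ^ 2) ^ 2) = 0 := by
        rw [hODE r hr]
        field_simp
        ring
      rw [hDval] at hD
      exact hD
    have hcontI : ∀ r ∈ I, ContinuousAt h r := fun r hr => (hderiv r hr).continuousAt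
    have key : ∀ x y : ℝ, x ∈ I → y ∈ I → x ≤ y → h y = h x := by
      intro x y hx hy hxy
      have hsub : Icc x y ⊆ I := hIconn.out hx hy
      exact constant_of_has_deriv_right_zero
        (fun t ht => (hcontI t (hsub ht)).continuousWithinAt)
        (fun t ht => (hderiv t (hsub (Ico_subset_Icc_self ht))).hasDerivWithinAt)
        y ⟨hxy, le_rfl⟩
    have hconst : ∀ r ∈ I, h r = h r₀ := by
      intro r hr
      rcases le_total r r₀ with hle | hle
      · exact (key r r₀ hr hr₀ hle).symm
      · exact key r₀ r hr₀ hr hle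
    set c : ℝ := h r₀ with hc
    have hmain : ∀ r ∈ I, 0 < μ + c * r ^ 2 ∧ (K r) ^ 2 * (μ + c * r ^ 2) = r ^ 2 := by
      intro r hr
      have hrpos : (0:ℝ) < r := hIpos hr
      have hKne : K r ≠ 0 := hz r hr
      have he := hconst r hr
      rw [hh] at he
      simp only at he
      have heq : (K r) ^ 2 * (μ + c * r ^ 2) = r ^ 2 := by
        field_simp at he
        nlinarith [he, sq_nonneg (K r), sq_nonneg r]
      refine ⟨?_, heq⟩
      have hK2 : 0 < (K r) ^ 2 := by positivity
      nlinarith [heq, sq_nonneg r, hrpos]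
    set σ : ℝ := if 0 < K r₀ then (1:ℝ) else -1 with hσ
    have hivt : ∀ x y, x ∈ I → y ∈ I → K x < 0 → 0 < K y → False := by
      intro x y hx hy hKx hKy
      rcases le_total x y with hxy | hxy
      · have hsub : Icc x y ⊆ I := hIconn.out hx hy
        have hcont : ContinuousOn K (Icc x y) :=
          fun t ht => (hK t (hsub ht)).continuousAt.continuousWithinAt
        obtain ⟨z, hz', hz0⟩ := intermediate_value_Icc hxy hcont ⟨hKx.le, hKy.le⟩
        exact hz z (hsub hz') hz0
      · have hsub : Icc y x ⊆ I := hIconn.out hy hx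
        have hcont : ContinuousOn K (Icc y x) :=
          fun t ht => (hK t (hsub ht)).continuousAt.continuousWithinAt
        obtain ⟨z, hz', hz0⟩ := intermediate_value_Icc' hxy hcont ⟨hKx.le, hKy.le⟩
        exact hz z (hsub hz') hz0
    have hsign : ∀ r ∈ I, 0 < σ * K r := by
      intro r hr
      have hKne : K r ≠ 0 := hz r hr
      by_cases h0 : 0 < K r₀
      · rw [hσ, if_pos h0, one_mul]
        rcases hKne.lt_or_gt with hneg | hpos
        · exact absurd (hivt r r₀ hr hr₀ hneg h0) id
        · exact hpos
      · rw [hσ, if_neg h0]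
        have hK0neg : K r₀ < 0 := (hz r₀ hr₀).lt_or_gt.resolve_right h0
        rcases hKne.lt_or_gt with hneg | hpos
        · linarith
        · exact absurd (hivt r₀ r hr₀ hr hK0neg hpos) id
    refine ⟨c, σ, ?_, fun r hr => (hmain r hr).1, ?_⟩
    · rw [hσ]; split_ifs <;> simp
    intro r hr
    have hrpos : (0:ℝ) < r := hIpos hr
    obtain ⟨hu, heq⟩ := hmain r hr
    have hspos : 0 < Real.sqrt (μ + c * r ^ 2) := Real.sqrt_pos.mpr hu
    have habs : |K r| * Real.sqrt (μ + c * r ^ 2) = r := by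
      rw [← Real.sqrt_sq_eq_abs, ← Real.sqrt_mul (sq_nonneg _), heq]
      exact Real.sqrt_sq hrpos.le
    have hKσ : K r = σ * |K r| := by
      have := hsign r hr
      rw [hσ] at this ⊢
      split_ifs at this ⊢ with h0
      · rw [one_mul] at this ⊢; exact (abs_of_pos this).symm
      · rw [abs_of_neg (by linarith), neg_one_mul, neg_neg]
    rw [hKσ]
    rw [eq_div_iff hspos.ne']
    rw [mul_assoc, habs]
  · intro hrhs r hr
    have hrpos : (0:ℝ) < r := hIpos hr
    rcases hrhs with hzero | ⟨c, σ, hσ, hu, hform⟩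
    · have hev : K =ᶠ[nhds r] (fun _ => (0:ℝ)) :=
        Filter.eventuallyEq_of_mem (hIopen.mem_nhds hr) hzero
      have h0 : HasDerivAt K 0 r := (hasDerivAt_const r (0:ℝ)).congr_of_eventuallyEq hev
      rw [(hK r hr).unique h0, hzero r hr]
      simp
    · have hev : K =ᶠ[nhds r] (fun x => σ * x / Real.sqrt (μ + c * x ^ 2)) :=
        Filter.eventuallyEq_of_mem (hIopen.mem_nhds hr) hform
      have hder : HasDerivAt K (σ * μ / Real.sqrt (μ + c * r ^ 2) ^ 3) r :=
        (formula_hasDerivAt μ c σ r hrpos (hu r hr)).congr_of_eventuallyEq hev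
      rw [(hK r hr).unique hder, hform r hr]
      have hs : Real.sqrt (μ + c * r ^ 2) ≠ 0 := (Real.sqrt_pos.mpr (hu r hr)).ne'
      have hσ3 : σ ^ 3 = σ := by rcases hσ with h | h <;> rw [h] <;> ring
      field_simp
      linear_combination (-1) * hσ3
end

section
/- Let a, b > 0 and ε ∈ {1, −1}, and let I_ε = {x ∈ (0, a) : ε(a⁴ − (a² + b²)x²) > 0}. Define 𝒦(x) = b·x/√(ε(a⁴ − (a² + b²)x²)) for x ∈ I_ε. Then: (i) 𝒦 is differentiable on I_ε and 𝒦'(x) = (ε·a⁴/b²)·𝒦(x)³/x³ for all x ∈ I_ε, so the elliptic rotational surface with geometric linear momentum 𝒦 satisfies the cubic Weingarten relation k_m = (ε·a⁴/b²)·k_p³ between its meridian and parallel principal curvatures k_m = 𝒦'(x) and k_p = 𝒦(x)/x; and (ii) the ellipse graph z(x) = (b/a)·√(a² − x²) satisfies z'(x)² = 𝒦(x)²/(𝒦(x)² + ε) for all x ∈ I_ε, i.e. the generatrix of this surface is an arc of the ellipse x²/a² + z²/b² = 1, and the surface is part of the Lorentzian ellipsoid of revolution {x₁² + x₂² + (a²/b²)x₃²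 = a²} in 𝕃³ (spacelike on the region x² < a⁴/(a² + b²), timelike on the region x² > a⁴/(a² + b²)). -/
/-- Let `a, b > 0`, `ε = ±1`,
`I_ε = {x ∈ (0, a) : ε(a⁴ − (a² + b²)x²) > 0}` and
`𝒦(x) = b·x/√(ε(a⁴ − (a² + b²)x²))`. Then (i) `𝒦` satisfies
`𝒦'(x) = (ε·a⁴/b²)·𝒦(x)³/x³` on `I_ε`, i.e. the elliptic rotational surface
with this geometric linear momentum satisfies the cubic Weingarten relation
`k_m = (ε·a⁴/b²)·k_p³`; and (ii) the ellipse graph `z(x) = (b/a)·√(a² − x²)`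
satisfies `z'(x)² = 𝒦(x)²/(𝒦(x)² + ε)` on `I_ε`, so the generatrix is an arc
of the ellipse `x²/a² + z²/b² = 1` and the surface is part of the Lorentzian
ellipsoid of revolution `{x₁² + x₂² + (a²/b²)x₃² = a²}` in `𝕃³`. -/
theorem lorentzian_ellipsoid_cubic_weingarten
    (a b ε : ℝ) (ha : 0 < a) (hb : 0 < b) (hε : ε = 1 ∨ ε = -1)
    (Iε : Set ℝ)
    (hIε : Iε = {x ∈ Set.Ioo (0 : ℝ) a |
      0 < ε * (a ^ 4 - (a ^ 2 + b ^ 2) * x ^ 2)})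
    (K : ℝ → ℝ)
    (hK : ∀ x, K x = b * x / Real.sqrt (ε * (a ^ 4 - (a ^ 2 + b ^ 2) * x ^ 2))) :
    -- (i) the momentum satisfies the cubic Weingarten ODE k_m = (ε·a⁴/b²)·k_p³
    (∀ x ∈ Iε, HasDerivAt K (ε * a ^ 4 / b ^ 2 * (K x ^ 3 / x ^ 3)) x) ∧
    -- (ii) the ellipse graph z(x) = (b/a)·√(a² − x²) satisfies
    --      z'(x)² = 𝒦(x)²/(𝒦(x)² + ε)
    (∀ x ∈ Iε, ∃ d : ℝ,
      HasDerivAt (fun ξ => (b / a) * Real.sqrt (a ^ 2 - ξ ^ 2)) d x ∧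
      d ^ 2 = K x ^ 2 / (K x ^ 2 + ε)) ∧
    -- the surface is part of the Lorentzian ellipsoid x₁² + x₂² + (a²/b²)x₃² = a²
    (∀ x ∈ Iε, ∀ t : ℝ,
      (x * Real.cos t) ^ 2 + (x * Real.sin t) ^ 2
        + (a ^ 2 / b ^ 2) * ((b / a) * Real.sqrt (a ^ 2 - x ^ 2)) ^ 2
      = a ^ 2) := by
  have hε2 : ε ^ 2 = 1 := by rcases hε with h | h <;> simp [h]
  refine ⟨?_, ?_, ?_⟩
  · -- (i)
    intro x hx
    rw [hIε] at hx
    obtain ⟨⟨hx0, hxa⟩, hu⟩ := hx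
    have hs : 0 < Real.sqrt (ε * (a ^ 4 - (a ^ 2 + b ^ 2) * x ^ 2)) := Real.sqrt_pos.mpr hu
    set s : ℝ := Real.sqrt (ε * (a ^ 4 - (a ^ 2 + b ^ 2) * x ^ 2)) with hs_def
    have hs2 : s ^ 2 = ε * (a ^ 4 - (a ^ 2 + b ^ 2) * x ^ 2) := Real.sq_sqrt hu.le
    have hU : HasDerivAt (fun ξ : ℝ => ε * (a ^ 4 - (a ^ 2 + b ^ 2) * ξ ^ 2))
        (ε * (0 - (a ^ 2 + b ^ 2) * (2 * x ^ 1))) x :=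
      ((hasDerivAt_const x (a ^ 4)).sub
        ((hasDerivAt_pow 2 x).const_mul (a ^ 2 + b ^ 2))).const_mul ε
    have hS : HasDerivAt (fun ξ : ℝ => Real.sqrt (ε * (a ^ 4 - (a ^ 2 + b ^ 2) * ξ ^ 2)))
        (ε * (0 - (a ^ 2 + b ^ 2) * (2 * x ^ 1)) / (2 * s)) x :=
      hU.sqrt (ne_of_gt hu)
    have hKd : HasDerivAt K
        ((b * 1 * s - b * x * (ε * (0 - (a ^ 2 + b ^ 2) * (2 * x ^ 1)) / (2 * s))) / s ^ 2) x := by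
      have hfun : K = fun ξ => b * ξ / Real.sqrt (ε * (a ^ 4 - (a ^ 2 + b ^ 2) * ξ ^ 2)) :=
        funext hK
      rw [hfun]
      exact ((hasDerivAt_id x).const_mul b).div hS (ne_of_gt hs)
    convert hKd using 1
    rw [hK x, ← hs_def]
    have hx0' : x ≠ 0 := ne_of_gt hx0
    have hs0 : s ≠ 0 := ne_of_gt hs
    have hb0 : b ≠ 0 := ne_of_gt hb
    field_simp
    linear_combination (-2) * hs2
  · -- (ii)
    intro x hx
    rw [hIε] at hx
    obtain ⟨⟨hx0, hxa⟩, hu⟩ := hx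
    have haxpos : (0 : ℝ) < a ^ 2 - x ^ 2 := by nlinarith
    have ht : 0 < Real.sqrt (a ^ 2 - x ^ 2) := Real.sqrt_pos.mpr haxpos
    set t : ℝ := Real.sqrt (a ^ 2 - x ^ 2) with ht_def
    have ht2 : t ^ 2 = a ^ 2 - x ^ 2 := Real.sq_sqrt haxpos.le
    have hT : HasDerivAt (fun ξ : ℝ => (b / a) * Real.sqrt (a ^ 2 - ξ ^ 2))
        ((0 - 2 * x ^ 1) / (2 * t) * (b / a)) x := by
      have h := (((hasDerivAt_const x (a ^ 2)).sub (hasDerivAt_pow 2 x)).sqrt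
        (ne_of_gt haxpos)).const_mul (b / a)
      refine h.congr_deriv ?_
      simp only [Pi.sub_apply, ht_def]
      ring
    refine ⟨_, hT, ?_⟩
    have hs : 0 < Real.sqrt (ε * (a ^ 4 - (a ^ 2 + b ^ 2) * x ^ 2)) := Real.sqrt_pos.mpr hu
    set s : ℝ := Real.sqrt (ε * (a ^ 4 - (a ^ 2 + b ^ 2) * x ^ 2)) with hs_def
    have hs2 : s ^ 2 = ε * (a ^ 4 - (a ^ 2 + b ^ 2) * x ^ 2) := Real.sq_sqrt hu.le
    rw [hK x, ← hs_def]
    have hx0' : x ≠ 0 := ne_of_gt hx0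
    have hs0 : s ≠ 0 := ne_of_gt hs
    have ht0 : t ≠ 0 := ne_of_gt ht
    have ha0 : a ≠ 0 := ne_of_gt ha
    have hu0 : ε * (a ^ 4 - (a ^ 2 + b ^ 2) * x ^ 2) ≠ 0 := ne_of_gt hu
    have hax : a ^ 2 - x ^ 2 ≠ 0 := ne_of_gt haxpos
    have e1 : ((0 - 2 * x ^ 1) / (2 * t) * (b / a)) ^ 2
        = b ^ 2 * x ^ 2 / (a ^ 2 * (a ^ 2 - x ^ 2)) := by
      rw [← ht2]; field_simp; ring
    have e2 : (b * x / s) ^ 2 = b ^ 2 * x ^ 2 / (ε * (a ^ 4 - (a ^ 2 + b ^ 2) * x ^ 2)) := by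
      rw [← hs2]; field_simp
    have e3 : b ^ 2 * x ^ 2 / (ε * (a ^ 4 - (a ^ 2 + b ^ 2) * x ^ 2)) + ε
        = a ^ 2 * (a ^ 2 - x ^ 2) / (ε * (a ^ 4 - (a ^ 2 + b ^ 2) * x ^ 2)) := by
      rw [div_add' _ _ _ hu0]
      congr 1
      linear_combination (a ^ 4 - (a ^ 2 + b ^ 2) * x ^ 2) * hε2
    rw [e1, e2, e3, div_div_div_eq]
    rw [mul_comm (b ^ 2 * x ^ 2) (ε * (a ^ 4 - (a ^ 2 + b ^ 2) * x ^ 2)),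
      mul_div_mul_left _ _ hu0]
  · -- (iii)
    intro x hx t
    rw [hIε] at hx
    obtain ⟨⟨hx0, hxa⟩, hu⟩ := hx
    have hax : (0 : ℝ) ≤ a ^ 2 - x ^ 2 := by nlinarith
    have hsq : Real.sqrt (a ^ 2 - x ^ 2) ^ 2 = a ^ 2 - x ^ 2 := Real.sq_sqrt hax
    have hpyth : Real.cos t ^ 2 + Real.sin t ^ 2 = 1 := by
      rw [add_comm]; exact Real.sin_sq_add_cos_sq t
    have ha0 : a ≠ 0 := ne_of_gt ha
    have hb0 : b ≠ 0 := ne_of_gt hb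
    field_simp
    linear_combination hsq + x ^ 2 * hpyth
end
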